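/- arXiv:1012.1279 — 7 statements merged into one kernel-verified Lean document; each statement's English description precedes it below -/
import Mathlib

section
/- Suppose a_{k+1}/a_k > 2k+4 for all k ≥ 1 (with (a_k) positive, increasing). Set r_k = ((2k+1)/(2k+2))·a_k. Then for 1 ≤ j ≤ k-1 one has 1 + r_k/a_j ≤ a_k/a_j and r_k/a_j - 1 ≥ (k/(k+1))·(a_k/a_j). -/
lemma mono_aux (a : ℕ → ℝ) (hinc : ∀ k : ℕ, 1 ≤ k → a k < a (k+1)) :
    ∀ j m : ℕ, 1 ≤ j → j ≤ m → a j ≤ a m := by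
  intro j m hj hjm
  induction m with
  | zero => omega
  | succ n ih =>
    rcases Nat.lt_or_ge j (n+1) with h | h
    · have h1 : j ≤ n := by omega
      have := ih h1
      have h2 : a n < a (n+1) := hinc n (by omega)
      linarith
    · have : j = n + 1 := by omega
      simp [this]

/-- If a_{k+1} > (2k+4)·a_k for an increasing positive sequence and
r_k = ((2k+1)/(2k+2))·a_k, then for 1 ≤ j ≤ k-1 we have
1 + r_k/a_j ≤ a_k/a_j and r_k/a_j - 1 ≥ (k/(k+1))·(a_k/a_j). -/
theorem stmt5 (a : ℕ → ℝ) (hpos : ∀ k : ℕ, 1 ≤ k → 0 < a k)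
    (hinc : ∀ k : ℕ, 1 ≤ k → a k < a (k+1))
    (hgrow : ∀ k : ℕ, 1 ≤ k → (2 * (k : ℝ) + 4) * a k < a (k+1)) :
    ∀ k : ℕ, 1 ≤ k → ∀ j : ℕ, 1 ≤ j → j ≤ k - 1 →
      (1 + (2 * (k : ℝ) + 1) / (2 * (k : ℝ) + 2) * a k / a j ≤ a k / a j) ∧
      ((k : ℝ) / ((k : ℝ) + 1) * (a k / a j) ≤
        (2 * (k : ℝ) + 1) / (2 * (k : ℝ) + 2) * a k / a j - 1) := by
  intro k hk j hj hjk
  have hk2 : 2 ≤ k := by omega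
  have haj : 0 < a j := hpos j hj
  have hak : 0 < a k := hpos k hk
  -- a k > (2k+2) * a (k-1)
  have hg := hgrow (k-1) (by omega)
  have hcast : ((k - 1 : ℕ) : ℝ) = (k : ℝ) - 1 := by
    push_cast [Nat.cast_sub (by omega : 1 ≤ k)]; ring
  have hk1k : k - 1 + 1 = k := by omega
  rw [hcast, hk1k] at hg
  have hmono : a j ≤ a (k - 1) := mono_aux a hinc j (k-1) hj hjk
  have key : (2 * (k : ℝ) + 2) * a j ≤ a k := by nlinarith
  -- divide
  have hq : 2 * (k : ℝ) + 2 ≤ a k / a j := by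
    rw [le_div_iff₀ haj]; linarith
  have hkpos : (0:ℝ) < (k:ℝ) := by positivity
  have h2k2 : (0:ℝ) < 2 * (k:ℝ) + 2 := by positivity
  have hd : 1 ≤ a k / a j / (2 * (k : ℝ) + 2) := by
    rw [le_div_iff₀ h2k2]; linarith
  have e1 : (2 * (k : ℝ) + 1) / (2 * (k : ℝ) + 2) * a k / a j
      = (2 * (k : ℝ) + 1) * (a k / a j / (2 * (k : ℝ) + 2)) := by
    field_simp
  have e2 : a k / a j = (2 * (k : ℝ) + 2) * (a k / a j / (2 * (k : ℝ) + 2)) := by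
    field_simp
  have hk1 : (0:ℝ) < (k:ℝ) + 1 := by positivity
  have e3 : (k : ℝ) / ((k : ℝ) + 1) * ((2 * (k : ℝ) + 2) * (a k / a j / (2 * (k : ℝ) + 2)))
      = 2 * (k:ℝ) * (a k / a j / (2 * (k : ℝ) + 2)) := by
    field_simp
  set d := a k / a j / (2 * (k : ℝ) + 2) with hddef
  rw [e1, e2, e3]
  constructor
  · nlinarith
  · nlinarith
end

section
/- With the sequence a_1=1, a_{k+1}=8C·a_k·∏_{j=1}^{k-1}(a_k/a_j), r_k = ((2k+1)/(2k+2))a_k, and f(z) = C·z·∏_{k=1}^∞(1 - z/a_k), for C sufficiently large and all k ≥ 1: if |z| = r_k then |f(z)| ≤ (1/2)·a_{k+1}. -/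
/-! On `‖z‖ = r_k ≤ a_k` each factor satisfies `‖1 - z / a_j‖ ≤ 1 + a_k / a_j`, and for `C ≥ 1`
the recursion forces `a_{j+1} ≥ 8 a_j`. For `j < k` write
`1 + a_k / a_j = (a_k / a_j)(1 + a_j / a_k)` with `∑_{j<k} a_j / a_k ≤ 1/7`; the factor `j = k`
is at most `2`; and `∑_{j>k} a_k / a_j ≤ 1/7`. Bounding `∏ (1 + x_j) ≤ exp (∑ x_j)` gives
`‖f z‖ ≤ C a_k · 2 e^{2/7} ∏_{j<k} a_k / a_j ≤ 4 C a_k ∏_{j<k} a_k / a_j = a_{k+1} / 2`. -/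

open Finset Real

lemma prod_one_add_le_exp_sum_of_nonneg {ι : Type*} (s : Finset ι) {f : ι → ℝ}
    (hf : ∀ i ∈ s, 0 ≤ f i) : ∏ i ∈ s, (1 + f i) ≤ exp (∑ i ∈ s, f i) := by
  rw [exp_sum]
  exact prod_le_prod (fun i hi => by linarith [hf i hi])
    fun i _ => by linarith [add_one_le_exp (f i)]

lemma norm_tprod_le_of_prod_range_norm_le {E : Type*} [NormedCommRing E] [NormMulClass E]
    [NormOneClass E] {F : ℕ → E} (hF : Multipliable F) {B : ℝ} (N : ℕ)
    (h : ∀ n ≥ N, ∏ i ∈ range n, ‖F i‖ ≤ B) : ‖∏' i, F i‖ ≤ B :=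
  le_of_tendsto hF.hasProd.tendsto_prod_nat.norm
    (Filter.eventually_atTop.2 ⟨N, fun n hn => by simpa only [norm_prod] using h n hn⟩)

section Lacunary

variable {a : ℕ → ℝ} {q : ℝ}

lemma sum_Ico_le_of_mul_le_succ (hq : 1 < q) {i k : ℕ}
    (hgrow : ∀ n ≥ i, q * a n ≤ a (n + 1)) (hik : i ≤ k) :
    ∑ j ∈ Ico i k, a j ≤ (a k - a i) / (q - 1) := by
  induction k, hik using Nat.le_induction with
  | base => simp
  | succ k hik ih =>
    rw [le_div_iff₀ (by linarith)] at ih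
    rw [sum_Ico_succ_top hik, le_div_iff₀ (by linarith)]
    linarith [hgrow k hik]

lemma sum_Ioc_inv_le_of_mul_le_succ (hq : 1 < q) {k n : ℕ} (hpos : ∀ m ≥ k, 0 < a m)
    (hgrow : ∀ m ≥ k, q * a m ≤ a (m + 1)) (hkn : k ≤ n) :
    ∑ j ∈ Ioc k n, (a j)⁻¹ ≤ ((a k)⁻¹ - (a n)⁻¹) / (q - 1) := by
  induction n, hkn using Nat.le_induction with
  | base => simp
  | succ n hkn ih =>
    have hinv : q * (a (n + 1))⁻¹ ≤ (a n)⁻¹ := by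
      rw [← div_eq_mul_inv, div_le_iff₀ (hpos _ (by omega)), ← div_eq_inv_mul,
        le_div_iff₀ (hpos n hkn)]
      exact hgrow n hkn
    rw [le_div_iff₀ (by linarith)] at ih
    rw [sum_Ioc_succ_top hkn, le_div_iff₀ (by linarith)]
    linarith

lemma summable_inv_of_mul_le_succ (hq : 1 < q) (hpos : ∀ n ≥ 1, 0 < a n)
    (hgrow : ∀ n ≥ 1, q * a n ≤ a (n + 1)) : Summable fun n => (a n)⁻¹ := by
  refine summable_of_ratio_norm_eventually_le (inv_lt_one_of_one_lt₀ hq)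
    (Filter.eventually_atTop.2 ⟨1, fun n hn => ?_⟩)
  have han := hpos n hn
  have han1 := hpos (n + 1) (by omega)
  rw [norm_inv, norm_inv, Real.norm_of_nonneg han.le, Real.norm_of_nonneg han1.le,
    ← mul_inv, inv_le_inv₀ han1 (by positivity)]
  exact hgrow n hn

lemma prod_Ico_one_add_div_le (hq : 1 < q) (hpos : ∀ n ≥ 1, 0 < a n)
    (hgrow : ∀ n ≥ 1, q * a n ≤ a (n + 1)) {k : ℕ} (hk : 1 ≤ k) {r : ℝ} (hr0 : 0 ≤ r)
    (hrk : r ≤ a k) :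
    ∏ j ∈ Ico 1 k, (1 + r / a j) ≤ (∏ j ∈ Ico 1 k, a k / a j) * exp (1 / (q - 1)) := by
  have hak := hpos k hk
  have hP : 0 ≤ ∏ j ∈ Ico 1 k, a k / a j :=
    prod_nonneg fun j hj => (div_pos hak (hpos j (mem_Ico.1 hj).1)).le
  have hsum : ∑ j ∈ Ico 1 k, a j / a k ≤ 1 / (q - 1) := by
    have := sum_Ico_le_of_mul_le_succ hq hgrow hk
    rw [le_div_iff₀ (by linarith)] at this
    rw [← sum_div, div_le_div_iff₀ hak (by linarith)]
    linarith [hpos 1 le_rfl]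
  calc ∏ j ∈ Ico 1 k, (1 + r / a j)
      ≤ ∏ j ∈ Ico 1 k, (a k / a j * (1 + a j / a k)) := by
        refine prod_le_prod (fun j hj => ?_) fun j hj => ?_
        · have := hpos j (mem_Ico.1 hj).1
          positivity
        · have := hpos j (mem_Ico.1 hj).1
          have hsplit : a k / a j * (1 + a j / a k) = 1 + a k / a j := by field_simp; ring
          rw [hsplit]
          gcongr
    _ = (∏ j ∈ Ico 1 k, a k / a j) * ∏ j ∈ Ico 1 k, (1 + a j / a k) := prod_mul_distrib
    _ ≤ (∏ j ∈ Ico 1 k, a k / a j) * exp (∑ j ∈ Ico 1 k, a j / a k) := by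
        gcongr
        exact prod_one_add_le_exp_sum_of_nonneg _
          fun j hj => (div_pos (hpos j (mem_Ico.1 hj).1) hak).le
    _ ≤ (∏ j ∈ Ico 1 k, a k / a j) * exp (1 / (q - 1)) := by gcongr

lemma prod_Ioc_one_add_div_le (hq : 1 < q) {k n : ℕ} (hpos : ∀ m ≥ k, 0 < a m)
    (hgrow : ∀ m ≥ k, q * a m ≤ a (m + 1)) (hkn : k ≤ n) {r : ℝ} (hr0 : 0 ≤ r) (hrk : r ≤ a k) :
    ∏ j ∈ Ioc k n, (1 + r / a j) ≤ exp (1 / (q - 1)) := by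
  have hak := hpos k le_rfl
  refine (prod_one_add_le_exp_sum_of_nonneg _
    fun j hj => div_nonneg hr0 (hpos j (mem_Ioc.1 hj).1.le).le).trans ?_
  gcongr
  have han := hpos n hkn
  calc ∑ j ∈ Ioc k n, r / a j = r * ∑ j ∈ Ioc k n, (a j)⁻¹ := by
        simp_rw [div_eq_mul_inv, mul_sum]
    _ ≤ a k * ((a k)⁻¹ / (q - 1)) := by
        have hinv : ((a k)⁻¹ - (a n)⁻¹) / (q - 1) ≤ (a k)⁻¹ / (q - 1) := by
          gcongr
          exact sub_le_self _ (inv_nonneg.2 han.le)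
        exact mul_le_mul hrk ((sum_Ioc_inv_le_of_mul_le_succ hq hpos hgrow hkn).trans hinv)
          (sum_nonneg fun j hj => (inv_pos.2 (hpos j (mem_Ioc.1 hj).1.le)).le) hak.le
    _ = 1 / (q - 1) := by field_simp

lemma prod_Icc_one_add_div_le (hq : 1 < q) (hpos : ∀ n ≥ 1, 0 < a n)
    (hgrow : ∀ n ≥ 1, q * a n ≤ a (n + 1)) {k n : ℕ} (hk : 1 ≤ k) (hkn : k ≤ n) {r : ℝ}
    (hr0 : 0 ≤ r) (hrk : r ≤ a k) :
    ∏ j ∈ Icc 1 n, (1 + r / a j) ≤ 2 * exp (2 / (q - 1)) * ∏ j ∈ Ico 1 k, a k / a j := by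
  have hak := hpos k hk
  have hfactor : ∀ j ≥ 1, 0 ≤ 1 + r / a j := fun j hj => by have := hpos j hj; positivity
  have hfront := prod_Ico_one_add_div_le hq hpos hgrow hk hr0 hrk
  have htail := prod_Ioc_one_add_div_le hq (fun m hm => hpos m (hk.trans hm))
    (fun m hm => hgrow m (hk.trans hm)) hkn hr0 hrk
  have hmid : 1 + r / a k ≤ 2 := by linarith [div_le_one_of_le₀ hrk hak.le]
  rw [← Ico_add_one_right_eq_Icc, ← prod_Ico_consecutive _ hk (by omega),
    prod_eq_prod_Ico_succ_bot (show k < n + 1 by omega), Ico_add_one_add_one_eq_Ioc]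
  calc (∏ j ∈ Ico 1 k, (1 + r / a j)) * ((1 + r / a k) * ∏ j ∈ Ioc k n, (1 + r / a j))
      ≤ ((∏ j ∈ Ico 1 k, a k / a j) * exp (1 / (q - 1))) * (2 * exp (1 / (q - 1))) := by
        have hfront0 : 0 ≤ ∏ j ∈ Ico 1 k, (1 + r / a j) :=
          prod_nonneg fun j hj => hfactor j (mem_Ico.1 hj).1
        have htail0 : 0 ≤ ∏ j ∈ Ioc k n, (1 + r / a j) :=
          prod_nonneg fun j hj => hfactor j (hk.trans (mem_Ioc.1 hj).1.le)
        exact mul_le_mul hfront (mul_le_mul hmid htail htail0 zero_le_two)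
          (mul_nonneg (hfactor k hk) htail0) (hfront0.trans hfront)
    _ = 2 * exp (2 / (q - 1)) * ∏ j ∈ Ico 1 k, a k / a j := by
        rw [show 2 / (q - 1) = 1 / (q - 1) + 1 / (q - 1) by ring, exp_add]
        ring

lemma norm_tprod_one_sub_div_le (hq : 1 < q) (hpos : ∀ n ≥ 1, 0 < a n)
    (hgrow : ∀ n ≥ 1, q * a n ≤ a (n + 1)) {k : ℕ} (hk : 1 ≤ k) {z : ℂ} (hzk : ‖z‖ ≤ a k) :
    ‖∏' i, (1 - z / (a (i + 1) : ℂ))‖ ≤ 2 * exp (2 / (q - 1)) * ∏ j ∈ Ico 1 k, a k / a j := by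
  have hnorm : ∀ i, ‖z / (a (i + 1) : ℂ)‖ = ‖z‖ / a (i + 1) := fun i => by
    rw [norm_div, Complex.norm_real, Real.norm_of_nonneg (hpos _ (by omega)).le]
  have hmul : Multipliable fun i => 1 - z / (a (i + 1) : ℂ) := by
    simp_rw [sub_eq_add_neg]
    refine multipliable_one_add_of_summable ?_
    simp_rw [norm_neg, hnorm, div_eq_mul_inv]
    exact ((summable_nat_add_iff 1).2 (summable_inv_of_mul_le_succ hq hpos hgrow)).mul_left _
  refine norm_tprod_le_of_prod_range_norm_le hmul k fun n hn => ?_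
  calc ∏ i ∈ range n, ‖1 - z / (a (i + 1) : ℂ)‖
      ≤ ∏ i ∈ range n, (1 + ‖z‖ / a (i + 1)) :=
        prod_le_prod (fun _ _ => norm_nonneg _)
          fun i _ => (norm_sub_le _ _).trans (by rw [norm_one, hnorm])
    _ = ∏ j ∈ Icc 1 n, (1 + ‖z‖ / a j) := by
        rw [range_eq_Ico, prod_Ico_add' (fun j => 1 + ‖z‖ / a j), zero_add,
          Ico_add_one_right_eq_Icc]
    _ ≤ 2 * exp (2 / (q - 1)) * ∏ j ∈ Ico 1 k, a k / a j :=
        prod_Icc_one_add_div_le hq hpos hgrow hk hn (norm_nonneg z) hzk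

end Lacunary

lemma eight_mul_le_succ_of_rec {C : ℝ} {a : ℕ → ℝ} (hC : 1 ≤ C)
    (hpos : ∀ k : ℕ, 1 ≤ k → 0 < a k)
    (harec : ∀ k : ℕ, 1 ≤ k → a (k + 1) = 8 * C * a k * ∏ j ∈ Icc 1 (k - 1), (a k / a j)) :
    ∀ n ≥ 1, 8 * a n ≤ a (n + 1) := by
  intro n hn
  induction n using Nat.strong_induction_on with
  | _ n ih =>
    have hmono : MonotoneOn a (Set.Icc 1 n) := by
      refine monotoneOn_of_le_succ Set.ordConnected_Icc fun m _ hm hm' => ?_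
      rw [Order.succ_eq_add_one] at hm' ⊢
      linarith [ih m (by linarith [hm'.2]) hm.1, hpos m hm.1]
    have hP : 1 ≤ ∏ j ∈ Icc 1 (n - 1), a n / a j := one_le_prod fun j hj => by
      obtain ⟨hj1, hjn⟩ := mem_Icc.1 hj
      exact (one_le_div (hpos j hj1)).2 (hmono ⟨hj1, by omega⟩ ⟨hn, le_rfl⟩ (by omega))
    have hCP : 1 ≤ C * ∏ j ∈ Icc 1 (n - 1), a n / a j := one_le_mul_of_one_le_of_one_le hC hP
    calc 8 * a n ≤ 8 * a n * (C * ∏ j ∈ Icc 1 (n - 1), a n / a j) :=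
          le_mul_of_one_le_right (by linarith [hpos n hn]) hCP
      _ = a (n + 1) := by rw [harec n hn]; ring

/-- With a_1=1, a_{k+1}=8C·a_k·∏_{j=1}^{k-1}(a_k/a_j), r_k = ((2k+1)/(2k+2))a_k and
f(z) = C·z·∏(1 - z/a_k): for C sufficiently large and all k ≥ 1, if |z| = r_k then
|f(z)| ≤ (1/2)a_{k+1}. -/
theorem stmt6 : ∃ C0 : ℝ, ∀ C : ℝ, C0 ≤ C →
    ∀ a : ℕ → ℝ, (∀ k : ℕ, 1 ≤ k → 0 < a k) → a 1 = 1 →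
    (∀ k : ℕ, 1 ≤ k → a (k+1) = 8 * C * a k * ∏ j ∈ Finset.Icc 1 (k-1), (a k / a j)) →
    ∀ f : ℂ → ℂ, (∀ z, f z = C * z * ∏' i : ℕ, (1 - z / (a (i+1) : ℂ))) →
    ∀ k : ℕ, 1 ≤ k → ∀ z : ℂ,
      ‖z‖ = (2 * (k : ℝ) + 1) / (2 * (k : ℝ) + 2) * a k →
      ‖f z‖ ≤ a (k+1) / 2 := by
  refine ⟨1, fun C hC a hpos _ harec f hf k hk z hz => ?_⟩
  have hak := hpos k hk
  have hzk : ‖z‖ ≤ a k := by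
    rw [hz]
    exact mul_le_of_le_one_left hak.le ((div_le_one (by positivity)).2 (by linarith))
  have hprod := norm_tprod_one_sub_div_le (q := 8) (by norm_num)
    hpos (eight_mul_le_succ_of_rec hC hpos harec) hk hzk
  have hexp : exp (2 / (8 - 1)) ≤ 2 :=
    calc exp (2 / (8 - 1)) ≤ exp (log 2) := exp_le_exp.2 (by linarith [log_two_gt_d9])
      _ = 2 := exp_log two_pos
  have hP : 0 ≤ ∏ j ∈ Ico 1 k, a k / a j :=
    prod_nonneg fun j hj => (div_pos hak (hpos j (mem_Ico.1 hj).1)).le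
  have hk_not_min : ¬IsMin k := by simp only [isMin_iff_eq_bot, Nat.bot_eq_zero]; omega
  rw [hf, norm_mul, norm_mul, Complex.norm_real, Real.norm_of_nonneg (by linarith), harec k hk,
    Icc_sub_one_right_eq_Ico_of_not_isMin hk_not_min]
  calc C * ‖z‖ * ‖∏' i, (1 - z / (a (i + 1) : ℂ))‖
      ≤ C * a k * (2 * 2 * ∏ j ∈ Ico 1 k, a k / a j) := by
        gcongr
        exact hprod.trans (by gcongr)
    _ = 8 * C * a k * (∏ j ∈ Ico 1 k, a k / a j) / 2 := by ring
end

section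
/- With the same setup, for C sufficiently large and all k ≥ 1: if |z| = r_k then |f(z)| ≥ a_{k+1}/(32e(k+1)) > 10·a_k. -/
/-!
The recurrence gives `a (j + 1) ≥ 8C · a j`, so on `|z| = r_k` the factors `1 - z / a_j` with
`j ≠ k` are close to `|z| / a_j` for `j < k` and to `1` for `j > k`: the neglected ratios
`a_j / |z|` and `|z| / a_j` decay geometrically away from `j = k`, and the Weierstrass inequality
`∏ (1 - x_j) ≥ 1 - ∑ x_j` bounds the total loss by a constant factor. What remains is
`C |z| ∏_{j<k} (|z| / a_j) (1 - r_k) = C a_k r_k^k Q / (2k + 2)` with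
`Q = ∏_{j<k} a_k / a_j = a_{k+1} / (8C a_k)`, and `r_k^k ≥ 1/2` by Bernoulli's inequality.
The second inequality follows from `a_{k+1} ≥ (8C)^k a_k`.
-/

open Finset

lemma one_sub_sum_le_prod_one_sub {ι : Type*} (s : Finset ι) {x : ι → ℝ}
    (h0 : ∀ i ∈ s, 0 ≤ x i) (h1 : ∀ i ∈ s, x i ≤ 1) :
    1 - ∑ i ∈ s, x i ≤ ∏ i ∈ s, (1 - x i) := by
  induction s using Finset.cons_induction with
  | empty => simp
  | cons j s hj ih =>
    rw [forall_mem_cons] at h0 h1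
    rw [prod_cons, sum_cons]
    have hs := mul_le_mul_of_nonneg_left (ih h0.2 h1.2) (sub_nonneg.2 h1.1)
    nlinarith [sum_nonneg h0.2, h0.1]

lemma prod_mul_one_sub_sum_inv_le_prod_abs_one_sub {ι : Type*} (s : Finset ι) {x : ι → ℝ}
    (hx : ∀ i ∈ s, 1 ≤ x i) :
    (∏ i ∈ s, x i) * (1 - ∑ i ∈ s, (x i)⁻¹) ≤ ∏ i ∈ s, |1 - x i| := by
  have hx0 : ∀ i ∈ s, 0 < x i := fun i hi => one_pos.trans_le (hx i hi)
  calc (∏ i ∈ s, x i) * (1 - ∑ i ∈ s, (x i)⁻¹)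
      ≤ (∏ i ∈ s, x i) * ∏ i ∈ s, (1 - (x i)⁻¹) :=
        mul_le_mul_of_nonneg_left
          (one_sub_sum_le_prod_one_sub s (fun i hi => inv_nonneg.2 (hx0 i hi).le)
            fun i hi => inv_le_one_of_one_le₀ (hx i hi))
          (prod_nonneg fun i hi => (hx0 i hi).le)
    _ = ∏ i ∈ s, |1 - x i| := by
        rw [← prod_mul_distrib]
        refine prod_congr rfl fun i hi => ?_
        rw [abs_sub_comm, abs_of_nonneg (sub_nonneg.2 (hx i hi)), mul_sub, mul_one,
          mul_inv_cancel₀ (hx0 i hi).ne']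

lemma le_norm_tprod_one_sub {w : ℕ → ℂ} (hw : Summable fun i => ‖w i‖) {L : ℝ} {N : ℕ}
    (hL : ∀ n, N ≤ n → L ≤ ∏ i ∈ range n, |1 - ‖w i‖|) : L ≤ ‖∏' i, (1 - w i)‖ := by
  have hmult : Multipliable fun i => 1 - w i := by
    simpa [sub_eq_add_neg] using
      multipliable_one_add_of_summable (f := fun i => -w i) (by simpa using hw)
  refine ge_of_tendsto hmult.hasProd.tendsto_prod_nat.norm
    (Filter.eventually_atTop.2 ⟨N, fun n hn => (hL n hn).trans ?_⟩)
  rw [norm_prod]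
  exact prod_le_prod (fun _ _ => abs_nonneg _) fun i _ => by
    simpa using abs_norm_sub_norm_le (1 : ℂ) (w i)

lemma one_half_le_two_mul_add_one_div_pow (k : ℕ) :
    (1 : ℝ) / 2 ≤ ((2 * k + 1) / (2 * k + 2)) ^ k := by
  have hk : (0 : ℝ) < 2 * k + 2 := by positivity
  have hbern := one_add_mul_le_pow (a := -1 / (2 * (k : ℝ) + 2))
    (by rw [le_div_iff₀ hk]; linarith) k
  have hr : 1 + -1 / (2 * (k : ℝ) + 2) = (2 * k + 1) / (2 * k + 2) := by field_simp; ring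
  have hlow : (1 : ℝ) / 2 ≤ 1 + k * (-1 / (2 * k + 2)) := by
    rw [mul_div_assoc', mul_neg_one, neg_div, ← sub_eq_add_neg, le_sub_comm, div_le_iff₀ hk]
    linarith
  exact hlow.trans (hr ▸ hbern)

lemma mul_exp_one_lt_pow {q : ℝ} (hq : 2000 ≤ q) {k : ℕ} (hk : 1 ≤ k) :
    320 * Real.exp 1 * (k + 1) < q ^ k := by
  have he : Real.exp 1 < 3 := Real.exp_one_lt_three
  have hk' : (1 : ℝ) ≤ k := by exact_mod_cast hk
  have hbern := one_add_mul_le_pow (a := q - 1) (by linarith) k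
  rw [add_sub_cancel] at hbern
  nlinarith

section Growth

variable {b : ℕ → ℝ} {q : ℝ}

lemma growth_of_recurrence (hb : ∀ i, 0 < b i) (hq : 1 ≤ q)
    (hrec : ∀ m, b (m + 1) = q * b m * ∏ i ∈ range m, b m / b i) (m : ℕ) :
    q * b m ≤ b (m + 1) := by
  have step : ∀ m, (∀ i ≤ m, b i ≤ b m) → q * b m ≤ b (m + 1) := fun m hm => by
    rw [hrec m]
    refine le_mul_of_one_le_right (by nlinarith [hb m]) (one_le_prod fun i hi => ?_)
    exact (one_le_div (hb i)).2 (hm i (mem_range.1 hi).le)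
  have hmono : ∀ m, ∀ i ≤ m, b i ≤ b m := by
    intro m
    induction m with
    | zero => intro i hi; rw [Nat.le_zero.1 hi]
    | succ m ih =>
      intro i hi
      rcases Nat.le_succ_iff.1 hi with hi | rfl
      · exact (ih i hi).trans ((le_mul_of_one_le_left (hb m).le hq).trans (step m ih))
      · exact le_rfl
  exact step m (hmono m)

lemma monotone_of_growth (hb : ∀ i, 0 ≤ b i) (hq : 1 ≤ q) (hg : ∀ i, q * b i ≤ b (i + 1)) :
    Monotone b :=
  monotone_nat_of_le_succ fun i => (le_mul_of_one_le_left (hb i) hq).trans (hg i)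

lemma pow_le_prod_div_of_growth (hb : ∀ i, 0 < b i) (hq : 1 ≤ q)
    (hg : ∀ i, q * b i ≤ b (i + 1)) (m : ℕ) : q ^ m ≤ ∏ i ∈ range m, b m / b i := by
  have hmono := monotone_of_growth (fun i => (hb i).le) hq hg
  calc q ^ m = ∏ _i ∈ range m, q := by rw [prod_const, card_range]
    _ ≤ ∏ i ∈ range m, b m / b i := prod_le_prod (fun _ _ => by linarith) fun i hi =>
        (le_div_iff₀ (hb i)).2 ((hg i).trans (hmono (mem_range.1 hi)))

lemma sum_range_le_div_of_growth (hq : 1 < q) (hb : ∀ i, 0 ≤ b i)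
    (hg : ∀ i, q * b i ≤ b (i + 1)) (m : ℕ) : ∑ i ∈ range m, b i ≤ b m / (q - 1) := by
  have hq1 : 0 < q - 1 := sub_pos.2 hq
  induction m with
  | zero => simpa using div_nonneg (hb 0) hq1.le
  | succ m ih =>
    rw [le_div_iff₀ hq1] at ih
    rw [sum_range_succ, le_div_iff₀ hq1]
    nlinarith [hg m]

lemma inv_mul_le_inv_of_growth (hb : ∀ i, 0 < b i) (hg : ∀ i, q * b i ≤ b (i + 1)) (i : ℕ) :
    q * (b (i + 1))⁻¹ ≤ (b i)⁻¹ := by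
  rw [← div_eq_mul_inv, div_le_iff₀ (hb _), inv_mul_eq_div, le_div_iff₀ (hb i)]
  exact hg i

lemma sum_range_inv_add_le_of_growth (hq : 1 < q) (hb : ∀ i, 0 < b i)
    (hg : ∀ i, q * b i ≤ b (i + 1)) (m p : ℕ) :
    ∑ i ∈ range p, (b (m + i))⁻¹ ≤ q * (b m)⁻¹ / (q - 1) := by
  have hq1 : 0 < q - 1 := sub_pos.2 hq
  induction p generalizing m with
  | zero => simpa using div_nonneg (mul_nonneg (by linarith) (inv_nonneg.2 (hb m).le)) hq1.le
  | succ p ih =>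
    have ih' := ih (m + 1)
    rw [le_div_iff₀ hq1] at ih'
    simp only [add_right_comm m 1] at ih'
    rw [sum_range_succ', add_zero, le_div_iff₀ hq1]
    simp only [← add_assoc]
    nlinarith [inv_mul_le_inv_of_growth hb hg m]

lemma prod_range_div_mul_le_prod_abs_one_sub_div (hb : ∀ i, 0 < b i) (hq : 8 ≤ q)
    (hg : ∀ i, q * b i ≤ b (i + 1)) {m : ℕ} {R : ℝ} (hR : 3 / 4 * b m ≤ R) :
    (∏ i ∈ range m, R / b i) * (17 / 21) ≤ ∏ i ∈ range m, |1 - R / b i| := by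
  have hR0 : 0 < R := by linarith [hb m]
  have hmono := monotone_of_growth (fun i => (hb i).le) (by linarith) hg
  have hx : ∀ i ∈ range m, 1 ≤ R / b i := fun i hi => by
    have := (hg i).trans (hmono (mem_range.1 hi))
    rw [one_le_div (hb i)]
    nlinarith [hb i]
  have hsum : ∑ i ∈ range m, (R / b i)⁻¹ ≤ 4 / 21 := by
    simp_rw [inv_div]
    rw [← sum_div, div_le_iff₀ hR0]
    have h := sum_range_le_div_of_growth (by linarith) (fun i => (hb i).le) hg m
    have h7 : b m / (q - 1) ≤ b m / 7 :=
      div_le_div_of_nonneg_left (hb m).le (by norm_num) (by linarith)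
    linarith
  calc (∏ i ∈ range m, R / b i) * (17 / 21)
      ≤ (∏ i ∈ range m, R / b i) * (1 - ∑ i ∈ range m, (R / b i)⁻¹) :=
        mul_le_mul_of_nonneg_left (by linarith)
          (prod_nonneg fun i hi => zero_le_one.trans (hx i hi))
    _ ≤ ∏ i ∈ range m, |1 - R / b i| := prod_mul_one_sub_sum_inv_le_prod_abs_one_sub _ hx

lemma le_prod_Ico_abs_one_sub_div (hb : ∀ i, 0 < b i) (hq : 8 ≤ q)
    (hg : ∀ i, q * b i ≤ b (i + 1)) {m : ℕ} {R : ℝ} (hR0 : 0 ≤ R) (hR : R ≤ b m) (n : ℕ) :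
    6 / 7 ≤ ∏ i ∈ Ico (m + 1) n, |1 - R / b i| := by
  have hmono := monotone_of_growth (fun i => (hb i).le) (by linarith) hg
  have hx : ∀ i ∈ Ico (m + 1) n, R / b i ≤ 1 := fun i hi =>
    (div_le_one (hb i)).2 (hR.trans (hmono (by have := (mem_Ico.1 hi).1; omega)))
  have hsum : ∑ i ∈ Ico (m + 1) n, R / b i ≤ 1 / 7 := by
    rw [sum_Ico_eq_sum_range]
    simp_rw [div_eq_mul_inv]
    rw [← mul_sum]
    have h := sum_range_inv_add_le_of_growth (by linarith) hb hg (m + 1) (n - (m + 1))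
    have h' : q * (b (m + 1))⁻¹ / (q - 1) ≤ (b m)⁻¹ / 7 :=
      (div_le_div_of_nonneg_right (inv_mul_le_inv_of_growth hb hg m) (by linarith)).trans
        (div_le_div_of_nonneg_left (inv_nonneg.2 (hb m).le) (by norm_num) (by linarith))
    have hRb : R * (b m)⁻¹ ≤ 1 := by rw [← div_eq_mul_inv]; exact (div_le_one (hb m)).2 hR
    nlinarith
  calc (6 : ℝ) / 7 ≤ 1 - ∑ i ∈ Ico (m + 1) n, R / b i := by linarith
    _ ≤ ∏ i ∈ Ico (m + 1) n, (1 - R / b i) :=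
        one_sub_sum_le_prod_one_sub _ (fun i _ => div_nonneg hR0 (hb i).le) hx
    _ = ∏ i ∈ Ico (m + 1) n, |1 - R / b i| :=
        prod_congr rfl fun i hi => (abs_of_nonneg (sub_nonneg.2 (hx i hi))).symm

lemma prod_range_div_mul_one_sub_div_le_prod_abs (hb : ∀ i, 0 < b i) (hq : 8 ≤ q)
    (hg : ∀ i, q * b i ≤ b (i + 1)) {m n : ℕ} {R : ℝ} (hR : 3 / 4 * b m ≤ R) (hRm : R ≤ b m)
    (hn : m < n) :
    (∏ i ∈ range m, R / b i) * (1 - R / b m) / 2 ≤ ∏ i ∈ range n, |1 - R / b i| := by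
  have hd : 0 ≤ 1 - R / b m := sub_nonneg.2 ((div_le_one (hb m)).2 hRm)
  have hR0 : 0 ≤ R := by linarith [hb m]
  have hP : 0 ≤ ∏ i ∈ range m, R / b i := prod_nonneg fun i _ => div_nonneg hR0 (hb i).le
  have head := prod_range_div_mul_le_prod_abs_one_sub_div hb hq hg hR
  have tail := le_prod_Ico_abs_one_sub_div hb hq hg hR0 hRm n
  rw [← prod_range_mul_prod_Ico _ hn, prod_range_succ, abs_of_nonneg hd]
  calc (∏ i ∈ range m, R / b i) * (1 - R / b m) / 2
      ≤ (∏ i ∈ range m, R / b i) * (17 / 21) * (1 - R / b m) * (6 / 7) := by nlinarith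
    _ ≤ (∏ i ∈ range m, |1 - R / b i|) * (1 - R / b m) *
          ∏ i ∈ Ico (m + 1) n, |1 - R / b i| := by gcongr

lemma mul_le_norm_mul_tprod_one_sub_div (hb : ∀ i, 0 < b i) (hq : 8 ≤ q)
    (hg : ∀ i, q * b i ≤ b (i + 1)) {m : ℕ} {r : ℝ} (hr : 3 / 4 ≤ r) (hr1 : r ≤ 1) {z : ℂ}
    (hz : ‖z‖ = r * b m) :
    r ^ (m + 1) * b m * (∏ i ∈ range m, b m / b i) * (1 - r) / 2
      ≤ ‖z * ∏' i, (1 - z / (b i : ℂ))‖ := by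
  have hnorm : ∀ i, ‖z / (b i : ℂ)‖ = r * b m / b i := fun i => by
    rw [norm_div, Complex.norm_real, Real.norm_of_nonneg (hb i).le, hz]
  have hsum : Summable fun i => ‖z / (b i : ℂ)‖ := by
    simp_rw [hnorm, div_eq_mul_inv]
    refine Summable.mul_left _ (summable_of_sum_range_le (c := q * (b 0)⁻¹ / (q - 1))
      (fun i => inv_nonneg.2 (hb i).le) fun p => ?_)
    simpa using sum_range_inv_add_le_of_growth (by linarith) hb hg 0 p
  have htprod := le_norm_tprod_one_sub hsum (N := m + 1) fun n hn => by
    simp_rw [hnorm]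
    exact prod_range_div_mul_one_sub_div_le_prod_abs hb hq hg
      (mul_le_mul_of_nonneg_right hr (hb m).le) (by nlinarith [hb m]) hn
  have hhead : ∏ i ∈ range m, r * b m / b i = r ^ m * ∏ i ∈ range m, b m / b i := by
    simp_rw [mul_div_assoc]
    rw [prod_mul_distrib, prod_const, card_range]
  rw [hhead, mul_div_cancel_right₀ _ (hb m).ne'] at htprod
  rw [norm_mul, hz]
  calc r ^ (m + 1) * b m * (∏ i ∈ range m, b m / b i) * (1 - r) / 2
      = r * b m * (r ^ m * (∏ i ∈ range m, b m / b i) * (1 - r) / 2) := by ring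
    _ ≤ r * b m * ‖∏' i, (1 - z / (b i : ℂ))‖ := by
        gcongr
        nlinarith [hb m]

lemma le_mul_norm_mul_tprod_of_recurrence {C : ℝ} (hC : 1 ≤ C) (hb : ∀ i, 0 < b i)
    (hrec : ∀ m, b (m + 1) = 8 * C * b m * ∏ i ∈ range m, b m / b i) {m : ℕ} {z : ℂ}
    (hz : ‖z‖ = (2 * ((m + 1 : ℕ) : ℝ) + 1) / (2 * ((m + 1 : ℕ) : ℝ) + 2) * b m) :
    b (m + 1) / (32 * Real.exp 1 * (((m + 1 : ℕ) : ℝ) + 1))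
      ≤ C * ‖z * ∏' i, (1 - z / (b i : ℂ))‖ := by
  set K : ℝ := ((m + 1 : ℕ) : ℝ)
  set r : ℝ := (2 * K + 1) / (2 * K + 2)
  set Q := ∏ i ∈ range m, b m / b i
  have hK : 1 ≤ K := by simp [K]
  have hg := growth_of_recurrence hb (by linarith) hrec
  have hQ : 0 ≤ Q := prod_nonneg fun i _ => div_nonneg (hb m).le (hb i).le
  have hr : 3 / 4 ≤ r := by rw [le_div_iff₀ (by linarith)]; linarith
  have hr1 : r ≤ 1 := by rw [div_le_one (by linarith)]; linarith
  have hone : 1 - r = 1 / (2 * K + 2) := by rw [one_sub_div (by linarith)]; ring_nf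
  have hpow : 1 / 2 ≤ r ^ (m + 1) := one_half_le_two_mul_add_one_div_pow (m + 1)
  have he : 2 ≤ Real.exp 1 := by linarith [Real.add_one_le_exp 1]
  have hCbQ : 0 ≤ C * b m * Q := mul_nonneg (mul_nonneg (by linarith) (hb m).le) hQ
  rw [hrec m, div_le_iff₀ (by positivity)]
  calc 8 * C * b m * Q = 8 * (2 * (1 / 2)) * (C * b m * Q) := by ring
    _ ≤ 8 * (Real.exp 1 * r ^ (m + 1)) * (C * b m * Q) := by gcongr
    _ = C * (r ^ (m + 1) * b m * Q * (1 - r) / 2) * (32 * Real.exp 1 * (K + 1)) := by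
        rw [hone]; field_simp; ring
    _ ≤ C * ‖z * ∏' i, (1 - z / (b i : ℂ))‖ * (32 * Real.exp 1 * (K + 1)) := by
        gcongr
        exact mul_le_norm_mul_tprod_one_sub_div hb (by linarith) hg hr hr1 hz

lemma mul_lt_div_of_recurrence {C : ℝ} (hC : 250 ≤ C) (hb : ∀ i, 0 < b i)
    (hrec : ∀ m, b (m + 1) = 8 * C * b m * ∏ i ∈ range m, b m / b i) (m : ℕ) :
    10 * b m < b (m + 1) / (32 * Real.exp 1 * (((m + 1 : ℕ) : ℝ) + 1)) := by
  have hg := growth_of_recurrence hb (by linarith) hrec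
  have hQ := pow_le_prod_div_of_growth hb (by linarith) hg m
  have hpow := mul_exp_one_lt_pow (q := 8 * C) (by linarith) (k := m + 1) (by omega)
  have hbm := hb m
  rw [lt_div_iff₀ (by positivity), hrec m]
  calc 10 * b m * (32 * Real.exp 1 * (((m + 1 : ℕ) : ℝ) + 1))
      = b m * (320 * Real.exp 1 * (((m + 1 : ℕ) : ℝ) + 1)) := by ring
    _ < b m * (8 * C) ^ (m + 1) := by gcongr
    _ = 8 * C * b m * (8 * C) ^ m := by ring
    _ ≤ 8 * C * b m * ∏ i ∈ range m, b m / b i := by gcongr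

end Growth

lemma prod_Icc_one_eq_prod_range {M : Type*} [CommMonoid M] (g : ℕ → M) (m : ℕ) :
    ∏ j ∈ Icc 1 m, g j = ∏ i ∈ range m, g (i + 1) := by
  rw [range_eq_Ico, prod_Ico_add', ← Ico_add_one_right_eq_Icc]

/-- With the same setup, for C sufficiently large and all k ≥ 1: if |z| = r_k then
|f(z)| ≥ a_{k+1}/(32e(k+1)) > 10·a_k. -/
theorem stmt7 : ∃ C0 : ℝ, ∀ C : ℝ, C0 ≤ C →
    ∀ a : ℕ → ℝ, (∀ k : ℕ, 1 ≤ k → 0 < a k) → a 1 = 1 →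
    (∀ k : ℕ, 1 ≤ k → a (k+1) = 8 * C * a k * ∏ j ∈ Finset.Icc 1 (k-1), (a k / a j)) →
    ∀ f : ℂ → ℂ, (∀ z, f z = C * z * ∏' i : ℕ, (1 - z / (a (i+1) : ℂ))) →
    ∀ k : ℕ, 1 ≤ k → ∀ z : ℂ,
      ‖z‖ = (2 * (k : ℝ) + 1) / (2 * (k : ℝ) + 2) * a k →
      a (k+1) / (32 * Real.exp 1 * ((k : ℝ) + 1)) ≤ ‖f z‖ ∧
      10 * a k < a (k+1) / (32 * Real.exp 1 * ((k : ℝ) + 1)) := by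
  refine ⟨250, fun C hC a hpos _ hrec f hf k hk z hz => ?_⟩
  obtain ⟨m, rfl⟩ : ∃ m, k = m + 1 := ⟨k - 1, by omega⟩
  set b : ℕ → ℝ := fun i => a (i + 1)
  have hb : ∀ i, 0 < b i := fun i => hpos _ (by omega)
  have hrec' : ∀ m, b (m + 1) = 8 * C * b m * ∏ i ∈ range m, b m / b i := fun m => by
    show a (m + 1 + 1) = _
    rw [hrec (m + 1) (by omega), Nat.add_sub_cancel, prod_Icc_one_eq_prod_range]
  have hfz : ‖f z‖ = C * ‖z * ∏' i, (1 - z / (b i : ℂ))‖ := by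
    rw [hf, mul_assoc, norm_mul, Complex.norm_real, Real.norm_of_nonneg (by linarith)]
  rw [hfz]
  exact ⟨le_mul_norm_mul_tprod_of_recurrence (by linarith) hb hrec' hz,
    mul_lt_div_of_recurrence hC hb hrec' m⟩
end

section
/- For the annuli B_k = {z : 10a_k < |z| < ((2k+3)/(2k+4))a_{k+1}} and f as above, for C sufficiently large one has f(B_k) ⊂ B_{k+1} for all k ≥ 1; consequently every point of B_1 lies in the escaping set of f (its orbit tends to ∞). -/
/-!
On the annulus `B_k` write `|f z|` as
`C |z|^(k+1) / (a_1 ⋯ a_k) · ∏_{j ≤ k} |1 - a_j / z| · |1 - z / a_(k+1)| · ∏_{j > k+1} |1 - z / a_j|`.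
Since `a_(k+1) ≥ 800 a_k`, the first product is within `1/7` of `1` (because `|z| > 10 a_k`) and the
last within `1/99` of `1` (because `|z| < a_(k+1)`). The recursion says exactly that
`C a_k^(k+1) / (a_1 ⋯ a_k) = a_(k+1) / 8`, so `|f z|` is comparable to
`a_(k+1) / 8 · (|z| / a_k)^(k+1) · |1 - z / a_(k+1)|`: this exceeds `95 a_(k+1) / 8` on `B_k`,
and is below `a_(k+2) / 4` since `|z| < a_(k+1)`. Hence `f` maps `B_k` into `B_(k+1)`, and an orbit
starting in `B_1` satisfies `|f^[n] z| > 10 a_(n+1) → ∞`.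
-/

open Finset Filter

section ProductBounds

variable {ι R : Type*} [NormedCommRing R] [NormOneClass R]

theorem Finset.norm_prod_one_sub_sub_one_le (s : Finset ι) (w : ι → R) :
    ‖∏ i ∈ s, (1 - w i) - 1‖ ≤ Real.exp (∑ i ∈ s, ‖w i‖) - 1 := by
  simpa [sub_eq_add_neg] using s.norm_prod_one_add_sub_one_le (fun i ↦ -w i)

theorem norm_tprod_one_sub_sub_one_le [CompleteSpace R] {w : ι → R} (hw : Summable (‖w ·‖)) :
    ‖∏' i, (1 - w i) - 1‖ ≤ Real.exp (∑' i, ‖w i‖) - 1 := by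
  have hm : Multipliable (1 - w ·) := by
    simpa [sub_eq_add_neg] using
      multipliable_one_add_of_summable (f := (-w ·)) (by simpa using hw)
  refine le_of_tendsto' (Tendsto.norm (Tendsto.sub_const hm.hasProd 1)) fun s ↦ ?_
  refine (s.norm_prod_one_sub_sub_one_le w).trans ?_
  gcongr
  exact hw.sum_le_tsum s fun i _ ↦ norm_nonneg _

end ProductBounds

theorem Real.exp_sub_one_le_of_le {x c : ℝ} (hxc : x ≤ c) (hc₀ : 0 ≤ c) (hc₁ : c < 1) :
    Real.exp x - 1 ≤ c / (1 - c) := by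
  have h := (Real.exp_le_exp.2 hxc).trans (Real.exp_bound_div_one_sub_of_interval hc₀ hc₁)
  have : 1 / (1 - c) - 1 = c / (1 - c) := by field_simp [(by linarith : 1 - c ≠ 0)]; ring
  linarith

theorem norm_mul_tprod_eq {a : ℕ → ℝ} (ha : ∀ i, 0 < a (i + 1)) {C : ℝ} (hC : 0 ≤ C) {z : ℂ}
    (hz : z ≠ 0) (k : ℕ) (hw : Summable fun i ↦ ‖z / a (i + (k + 1) + 1)‖) :
    ‖C * z * ∏' i, (1 - z / a (i + 1))‖ = C * ‖z‖ ^ (k + 1) / (∏ i ∈ range k, a (i + 1)) *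
      (‖∏ i ∈ range k, (1 - a (i + 1) / z)‖ * ‖1 - z / a (k + 1)‖ *
        ‖∏' i, (1 - z / a (i + (k + 1) + 1))‖) := by
  have hm : Multipliable fun i ↦ 1 - z / a (i + (k + 1) + 1) := by
    simpa [sub_eq_add_neg] using multipliable_one_add_of_summable
      (f := fun i ↦ -(z / a (i + (k + 1) + 1))) (by simpa using hw)
  have hfactor : ∀ i, 1 - z / a (i + 1) = -(z / a (i + 1)) * (1 - a (i + 1) / z) := by
    intro i
    have : (a (i + 1) : ℂ) ≠ 0 := by exact_mod_cast (ha i).ne'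
    field_simp
    ring
  have hnorm : ∀ i, ‖-(z / (a (i + 1) : ℂ))‖ = ‖z‖ / a (i + 1) := fun i ↦ by
    rw [norm_neg, norm_div, Complex.norm_real, Real.norm_of_nonneg (ha i).le]
  rw [← Multipliable.prod_mul_tprod_nat_mul' (f := fun i ↦ 1 - z / a (i + 1)) (k := k + 1) hm,
    prod_range_succ, prod_congr rfl fun i _ ↦ hfactor i, prod_mul_distrib]
  simp only [norm_mul, norm_prod, hnorm, prod_div_distrib, prod_const, card_range,
    Complex.norm_real, Real.norm_of_nonneg hC]
  ring

/- Either `y ≤ 1/20`, and `x ^ (k + 1) ≥ 100`; or `x ≥ 40`, and `x ^ (k + 1) ≥ 40 ^ (k + 1)` beats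
the factor `2 k + 4` lost in `1 - y`. -/
theorem ninety_five_le_pow_succ_mul_one_sub {k : ℕ} (hk : 1 ≤ k) {x y : ℝ} (hx : 10 ≤ x)
    (hxy : 800 * y ≤ x) (hy : 1 ≤ (2 * k + 4) * (1 - y)) : 95 ≤ x ^ (k + 1) * (1 - y) := by
  have hk' : (1 : ℝ) ≤ k := by exact_mod_cast hk
  rcases le_or_gt y (1 / 20) with hy20 | hy20
  · have : (100 : ℝ) ≤ x ^ (k + 1) :=
      calc (100 : ℝ) = 10 ^ 2 := by norm_num
        _ ≤ 10 ^ (k + 1) := pow_le_pow_right₀ (by norm_num) (by omega)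
        _ ≤ x ^ (k + 1) := pow_le_pow_left₀ (by norm_num) hx _
    nlinarith
  · have hpow : 95 * (2 * k + 4) ≤ x ^ (k + 1) := by
      have hbern : 1 + k * 39 ≤ (1 + 39 : ℝ) ^ k := one_add_mul_le_pow (by norm_num) k
      calc 95 * (2 * k + 4) ≤ 40 * (1 + k * 39 : ℝ) := by nlinarith
        _ ≤ 40 ^ (k + 1) := by rw [pow_succ]; norm_num at hbern ⊢; linarith
        _ ≤ x ^ (k + 1) := pow_le_pow_left₀ (by norm_num) (by linarith) _
    have hy1 : 0 ≤ 1 - y := by nlinarith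
    nlinarith [mul_le_mul_of_nonneg_right hpow hy1]

theorem iterate_mem_of_mapsTo_succ {α : Type*} {f : α → α} {S : ℕ → Set α} {m : ℕ}
    (hS : ∀ k, m ≤ k → Set.MapsTo f (S k) (S (k + 1))) {z : α} (hz : z ∈ S m) (n : ℕ) :
    f^[n] z ∈ S (m + n) := by
  induction n with
  | zero => simpa
  | succ n ih =>
    rw [Function.iterate_succ_apply']
    exact hS _ (Nat.le_add_right m n) ih

def annulus (a : ℕ → ℝ) (k : ℕ) : Set ℂ :=
  {z | 10 * a k < ‖z‖ ∧ ‖z‖ < (2 * (k : ℝ) + 3) / (2 * (k : ℝ) + 4) * a (k + 1)}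

theorem annulus_succ (a : ℕ → ℝ) (k : ℕ) :
    annulus a (k + 1) = {z | 10 * a (k + 1) < ‖z‖ ∧
      ‖z‖ < (2 * (k : ℝ) + 5) / (2 * (k : ℝ) + 6) * a (k + 2)} := by
  ext z
  simp only [annulus, Set.mem_ofPred_eq]
  push_cast
  ring_nf

theorem norm_lt_of_mem_annulus {a : ℕ → ℝ} {k : ℕ} (ha : 0 < a (k + 1)) {z : ℂ}
    (hz : z ∈ annulus a k) : ‖z‖ < a (k + 1) :=
  hz.2.trans_le <| mul_le_of_le_one_left ha.le <| (div_le_one (by positivity)).2 (by linarith)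

/-- The zeros `a 1, a 2, …` of `f`. -/
structure IsZeroSeq (C : ℝ) (a : ℕ → ℝ) : Prop where
  pos : ∀ k, 1 ≤ k → 0 < a k
  succ_eq : ∀ k, 1 ≤ k → a (k + 1) = 8 * C * a k * ∏ j ∈ Icc 1 (k - 1), (a k / a j)

namespace IsZeroSeq

variable {C : ℝ} {a : ℕ → ℝ}

theorem mul_le_succ (h : IsZeroSeq C a) (hC : 100 ≤ C) {k : ℕ} (hk : 1 ≤ k) :
    800 * a k ≤ a (k + 1) := by
  induction k using Nat.strong_induction_on with
  | _ k ih =>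
  have hle : ∀ j ∈ Icc 1 (k - 1), a j ≤ a k := by
    intro j hj
    rw [mem_Icc] at hj
    suffices ∀ n, j ≤ n → n ≤ k → a j ≤ a n from this k (by omega) le_rfl
    intro n hjn
    induction n, hjn using Nat.le_induction with
    | base => exact fun _ ↦ le_rfl
    | succ n hjn ihn =>
      intro hnk
      linarith [ihn (by omega), ih n (by omega) (by omega), h.pos n (by omega)]
  have hprod : 1 ≤ ∏ j ∈ Icc 1 (k - 1), a k / a j :=
    one_le_prod fun j hj ↦ (one_le_div (h.pos j (mem_Icc.1 hj).1)).2 (hle j hj)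
  have hak := h.pos k hk
  calc 800 * a k ≤ 8 * C * a k := by nlinarith
    _ ≤ a (k + 1) := by
      rw [h.succ_eq k hk]
      exact le_mul_of_one_le_right (by positivity) hprod

theorem pow_mul_le (h : IsZeroSeq C a) (hC : 100 ≤ C) {n : ℕ} (hn : 1 ≤ n) (m : ℕ) :
    800 ^ m * a n ≤ a (n + m) := by
  induction m with
  | zero => simp
  | succ m ih =>
    rw [pow_succ, ← add_assoc]
    linarith [h.mul_le_succ hC (k := n + m) (by omega)]

theorem sum_le (h : IsZeroSeq C a) (hC : 100 ≤ C) {k : ℕ} (hk : 1 ≤ k) :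
    ∑ i ∈ range k, a (i + 1) ≤ 800 / 799 * a k := by
  induction k, hk using Nat.le_induction with
  | base => simp; linarith [h.pos 1 le_rfl]
  | succ k hk ih => rw [sum_range_succ]; linarith [h.mul_le_succ hC hk]

theorem succ_mul_prod_eq (h : IsZeroSeq C a) {k : ℕ} (hk : 1 ≤ k) :
    a (k + 1) * ∏ i ∈ range k, a (i + 1) = 8 * C * a k ^ (k + 1) := by
  obtain ⟨m, rfl⟩ := Nat.exists_eq_add_of_le' hk
  have hQ : ∏ j ∈ Icc 1 m, (a (m + 1) / a j) = a (m + 1) ^ m / ∏ i ∈ range m, a (i + 1) := by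
    rw [range_eq_Ico, prod_Ico_add' (fun j ↦ a j) 0 m 1, prod_div_distrib, prod_const,
      Nat.card_Icc, Nat.add_sub_cancel]
    rfl
  have hpos : 0 < ∏ i ∈ range m, a (i + 1) := prod_pos fun i _ ↦ h.pos _ (by omega)
  rw [h.succ_eq _ hk, Nat.add_sub_cancel, hQ, prod_range_succ]
  field_simp
  ring

theorem tendsto_atTop (h : IsZeroSeq C a) (hC : 100 ≤ C) :
    Tendsto (fun n ↦ a (n + 1)) atTop atTop :=
  tendsto_atTop_mono (fun n ↦ by simpa [add_comm] using h.pow_mul_le hC le_rfl n)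
    ((tendsto_pow_atTop_atTop_of_one_lt (by norm_num)).atTop_mul_const (h.pos 1 le_rfl))

theorem norm_div_le (h : IsZeroSeq C a) (hC : 100 ≤ C) {n : ℕ} (hn : 1 ≤ n) (z : ℂ) (i : ℕ) :
    ‖z / a (i + n)‖ ≤ ‖z‖ / a n * (1 / 800) ^ i := by
  have han := h.pos n hn
  rw [norm_div, Complex.norm_real, Real.norm_of_nonneg (h.pos _ (by omega)).le]
  calc ‖z‖ / a (i + n) ≤ ‖z‖ / (800 ^ i * a n) :=
        div_le_div_of_nonneg_left (norm_nonneg _) (by positivity)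
          (by simpa [add_comm] using h.pow_mul_le hC hn i)
    _ = ‖z‖ / a n * (1 / 800) ^ i := by rw [one_div_pow]; field_simp

theorem summable_norm_div (h : IsZeroSeq C a) (hC : 100 ≤ C) {n : ℕ} (hn : 1 ≤ n) (z : ℂ) :
    Summable fun i ↦ ‖z / a (i + n)‖ :=
  .of_nonneg_of_le (fun _ ↦ norm_nonneg _) (h.norm_div_le hC hn z)
    ((summable_geometric_of_lt_one (by norm_num) (by norm_num)).mul_left _)

theorem tsum_norm_div_le (h : IsZeroSeq C a) (hC : 100 ≤ C) {n : ℕ} (hn : 1 ≤ n) (z : ℂ) :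
    ∑' i, ‖z / a (i + n)‖ ≤ 800 / 799 * (‖z‖ / a n) := by
  have hgeo := summable_geometric_of_lt_one (r := (1 / 800 : ℝ)) (by norm_num) (by norm_num)
  calc ∑' i, ‖z / a (i + n)‖ ≤ ∑' i, ‖z‖ / a n * (1 / 800 : ℝ) ^ i :=
        (h.summable_norm_div hC hn z).tsum_le_tsum (h.norm_div_le hC hn z) (hgeo.mul_left _)
    _ = 800 / 799 * (‖z‖ / a n) := by
      rw [tsum_mul_left, tsum_geometric_of_lt_one (by norm_num) (by norm_num)]
      ring

theorem abs_norm_head_sub_one_le (h : IsZeroSeq C a) (hC : 100 ≤ C) {k : ℕ} (hk : 1 ≤ k)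
    {z : ℂ} (hz : 10 * a k < ‖z‖) : |‖∏ i ∈ range k, (1 - a (i + 1) / z)‖ - 1| ≤ 1 / 7 := by
  have ht : 0 < ‖z‖ := by linarith [h.pos k hk]
  have hσ : ∑ i ∈ range k, ‖(a (i + 1) : ℂ) / z‖ ≤ 1 / 8 := by
    have : ∑ i ∈ range k, ‖(a (i + 1) : ℂ) / z‖ = (∑ i ∈ range k, a (i + 1)) / ‖z‖ := by
      rw [sum_div]
      refine sum_congr rfl fun i _ ↦ ?_
      rw [norm_div, Complex.norm_real, Real.norm_of_nonneg (h.pos _ (by omega)).le]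
    rw [this, div_le_iff₀ ht]
    linarith [h.sum_le hC hk]
  have key : ‖∏ i ∈ range k, (1 - (a (i + 1) : ℂ) / z) - 1‖ ≤ 1 / 7 :=
    ((range k).norm_prod_one_sub_sub_one_le _).trans <|
    (Real.exp_sub_one_le_of_le hσ (by norm_num) (by norm_num)).trans (by norm_num)
  simpa using (abs_norm_sub_norm_le _ 1).trans key

theorem abs_norm_tail_sub_one_le (h : IsZeroSeq C a) (hC : 100 ≤ C) {k : ℕ} (hk : 1 ≤ k)
    {z : ℂ} (hz : ‖z‖ ≤ a (k + 1)) : |‖∏' i, (1 - z / a (i + (k + 1) + 1))‖ - 1| ≤ 1 / 99 := by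
  have hτ : ∑' i, ‖z / a (i + (k + 2))‖ ≤ 1 / 799 := by
    have : ‖z‖ / a (k + 2) ≤ 1 / 800 := by
      rw [div_le_iff₀ (h.pos (k + 2) (by omega))]
      linarith [h.mul_le_succ hC (k := k + 1) (by omega)]
    linarith [h.tsum_norm_div_le hC (n := k + 2) (by omega) z]
  have key : ‖∏' i, (1 - z / a (i + (k + 1) + 1)) - 1‖ ≤ 1 / 99 :=
    (norm_tprod_one_sub_sub_one_le (h.summable_norm_div hC (n := k + 2) (by omega) z)).trans <|
    (Real.exp_sub_one_le_of_le hτ (by norm_num) (by norm_num)).trans (by norm_num)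
  simpa using (abs_norm_sub_norm_le _ 1).trans key

variable {f : ℂ → ℂ}

theorem norm_apply_eq (h : IsZeroSeq C a) (hC : 100 ≤ C)
    (hf : ∀ z, f z = C * z * ∏' i : ℕ, (1 - z / (a (i + 1) : ℂ))) {z : ℂ} (hz : z ≠ 0) (k : ℕ) :
    ‖f z‖ = C * ‖z‖ ^ (k + 1) / (∏ i ∈ range k, a (i + 1)) *
      (‖∏ i ∈ range k, (1 - a (i + 1) / z)‖ * ‖1 - z / a (k + 1)‖ *
        ‖∏' i, (1 - z / a (i + (k + 1) + 1))‖) := by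
  rw [hf]
  exact norm_mul_tprod_eq (fun i ↦ h.pos _ (by omega)) (by linarith) hz k
    (h.summable_norm_div hC (n := k + 2) (by omega) z)

theorem ten_mul_lt_norm_apply (h : IsZeroSeq C a) (hC : 100 ≤ C)
    (hf : ∀ z, f z = C * z * ∏' i : ℕ, (1 - z / (a (i + 1) : ℂ))) {k : ℕ} (hk : 1 ≤ k) {z : ℂ}
    (hz : z ∈ annulus a k) : 10 * a (k + 1) < ‖f z‖ := by
  obtain ⟨hz₁, hz₂⟩ := hz
  have hak := h.pos k hk
  have hak₁ := h.pos (k + 1) (by omega)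
  have ht : 0 < ‖z‖ := by linarith
  have hQ : 0 < ∏ i ∈ range k, a (i + 1) := prod_pos fun i _ ↦ h.pos _ (by omega)
  have hy : 1 ≤ (2 * k + 4) * (1 - ‖z‖ / a (k + 1)) := by
    have hy' : ‖z‖ / a (k + 1) < (2 * k + 3) / (2 * k + 4) := (div_lt_iff₀ hak₁).2 hz₂
    have : (2 * k + 4) * ((2 * k + 3) / (2 * k + 4)) = (2 * k + 3 : ℝ) :=
      mul_div_cancel₀ _ (by positivity)
    nlinarith
  have hxy : 800 * (‖z‖ / a (k + 1)) ≤ ‖z‖ / a k := by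
    rw [mul_div_assoc', div_le_div_iff₀ hak₁ hak]
    nlinarith [h.mul_le_succ hC hk]
  have h95 := ninety_five_le_pow_succ_mul_one_sub hk (by rw [le_div_iff₀ hak]; linarith) hxy hy
  have hcoeff : C * ‖z‖ ^ (k + 1) / ∏ i ∈ range k, a (i + 1) =
      a (k + 1) / 8 * (‖z‖ / a k) ^ (k + 1) := by
    rw [div_pow, ← mul_div_assoc, eq_div_iff (by positivity), div_mul_eq_mul_div,
      div_eq_iff hQ.ne']
    linear_combination -‖z‖ ^ (k + 1) / 8 * h.succ_mul_prod_eq hk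
  have hH := abs_le.1 (h.abs_norm_head_sub_one_le hC hk hz₁)
  have hT := abs_le.1 <|
    h.abs_norm_tail_sub_one_le hC hk (norm_lt_of_mem_annulus hak₁ ⟨hz₁, hz₂⟩).le
  have hM : 1 - ‖z‖ / a (k + 1) ≤ ‖1 - z / a (k + 1)‖ := by
    have := norm_sub_norm_le (1 : ℂ) (z / a (k + 1))
    rwa [norm_one, norm_div, Complex.norm_real, Real.norm_of_nonneg hak₁.le] at this
  rw [h.norm_apply_eq hC hf (norm_pos_iff.1 ht) k, hcoeff]
  calc 10 * a (k + 1) < a (k + 1) / 8 * 95 * (6 / 7 * (98 / 99)) := by linarith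
    _ ≤ a (k + 1) / 8 * ((‖z‖ / a k) ^ (k + 1) * (1 - ‖z‖ / a (k + 1))) *
        (‖∏ i ∈ range k, (1 - a (i + 1) / z)‖ * ‖∏' i, (1 - z / a (i + (k + 1) + 1))‖) := by
      gcongr <;> linarith
    _ = a (k + 1) / 8 * (‖z‖ / a k) ^ (k + 1) * (‖∏ i ∈ range k, (1 - a (i + 1) / z)‖ *
        (1 - ‖z‖ / a (k + 1)) * ‖∏' i, (1 - z / a (i + (k + 1) + 1))‖) := by ring
    _ ≤ _ := by gcongr

theorem norm_apply_lt (h : IsZeroSeq C a) (hC : 100 ≤ C)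
    (hf : ∀ z, f z = C * z * ∏' i : ℕ, (1 - z / (a (i + 1) : ℂ))) {k : ℕ} (hk : 1 ≤ k) {z : ℂ}
    (hz : z ∈ annulus a k) : ‖f z‖ < (2 * (k : ℝ) + 5) / (2 * (k : ℝ) + 6) * a (k + 2) := by
  have hak₁ := h.pos (k + 1) (by omega)
  have hak₂ := h.pos (k + 2) (by omega)
  have ht : 0 < ‖z‖ := by linarith [hz.1, h.pos k hk]
  have hta := (norm_lt_of_mem_annulus hak₁ hz).le
  have hQ : 0 < ∏ i ∈ range k, a (i + 1) := prod_pos fun i _ ↦ h.pos _ (by omega)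
  have hcoeff : C * a (k + 1) ^ (k + 1) / ∏ i ∈ range k, a (i + 1) = a (k + 2) / 8 := by
    have e := h.succ_mul_prod_eq (k := k + 1) (by omega)
    rw [prod_range_succ] at e
    rw [div_eq_div_iff hQ.ne' (by norm_num)]
    apply mul_right_cancel₀ hak₁.ne'
    linear_combination -e
  have hH := abs_le.1 (h.abs_norm_head_sub_one_le hC hk hz.1)
  have hT := abs_le.1 (h.abs_norm_tail_sub_one_le hC hk hta)
  have hM : ‖1 - z / a (k + 1)‖ ≤ 2 := by
    have := norm_sub_le (1 : ℂ) (z / a (k + 1))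
    rw [norm_one, norm_div, Complex.norm_real, Real.norm_of_nonneg hak₁.le] at this
    linarith [(div_le_one hak₁).2 hta]
  have hC₀ : 0 ≤ C := by linarith
  rw [h.norm_apply_eq hC hf (norm_pos_iff.1 ht) k]
  calc _ ≤ C * a (k + 1) ^ (k + 1) / (∏ i ∈ range k, a (i + 1)) * (8 / 7 * 2 * (100 / 99)) :=
        by gcongr <;> linarith
    _ < 1 / 2 * a (k + 2) := by rw [hcoeff]; linarith
    _ ≤ (2 * (k : ℝ) + 5) / (2 * (k : ℝ) + 6) * a (k + 2) := by
      refine mul_le_mul_of_nonneg_right ?_ hak₂.le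
      rw [div_le_div_iff₀ (by norm_num) (by positivity)]
      linarith

theorem mapsTo_annulus (h : IsZeroSeq C a) (hC : 100 ≤ C)
    (hf : ∀ z, f z = C * z * ∏' i : ℕ, (1 - z / (a (i + 1) : ℂ))) {k : ℕ} (hk : 1 ≤ k) :
    Set.MapsTo f (annulus a k) (annulus a (k + 1)) := by
  rw [annulus_succ]
  exact fun z hz ↦ ⟨h.ten_mul_lt_norm_apply hC hf hk hz, h.norm_apply_lt hC hf hk hz⟩

end IsZeroSeq

/-- For the annuli B_k = {z : s_k < |z| < r_{k+1}} (with s_k = 10a_k,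
r_{k+1} = ((2k+3)/(2k+4))a_{k+1}) and f as in the construction, for C sufficiently
large one has f(B_k) ⊆ B_{k+1} for all k ≥ 1; consequently every point of B_1 lies
in the escaping set of f. -/
theorem stmt9 : ∃ C0 : ℝ, ∀ C : ℝ, C0 ≤ C →
    ∀ a : ℕ → ℝ, (∀ k : ℕ, 1 ≤ k → 0 < a k) → a 1 = 1 →
    (∀ k : ℕ, 1 ≤ k → a (k+1) = 8 * C * a k * ∏ j ∈ Finset.Icc 1 (k-1), (a k / a j)) →
    ∀ f : ℂ → ℂ, (∀ z, f z = C * z * ∏' i : ℕ, (1 - z / (a (i+1) : ℂ))) →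
    (∀ k : ℕ, 1 ≤ k → Set.MapsTo f
        {z : ℂ | 10 * a k < ‖z‖ ∧
          ‖z‖ < (2 * (k : ℝ) + 3) / (2 * (k : ℝ) + 4) * a (k+1)}
        {z : ℂ | 10 * a (k+1) < ‖z‖ ∧
          ‖z‖ < (2 * (k : ℝ) + 5) / (2 * (k : ℝ) + 6) * a (k+2)}) ∧
    (∀ z : ℂ, 10 * a 1 < ‖z‖ →
      ‖z‖ < (2 * (1 : ℝ) + 3) / (2 * (1 : ℝ) + 4) * a 2 →
      Filter.Tendsto (fun n : ℕ => ‖f^[n] z‖) Filter.atTop Filter.atTop) := by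
  refine ⟨100, fun C hC a hpos _ hrec f hf ↦ ?_⟩
  have h : IsZeroSeq C a := ⟨hpos, hrec⟩
  have hmaps : ∀ k, 1 ≤ k → Set.MapsTo f (annulus a k) (annulus a (k + 1)) :=
    fun k hk ↦ h.mapsTo_annulus hC hf hk
  refine ⟨fun k hk ↦ annulus_succ a k ▸ hmaps k hk, fun z hz₁ hz₂ ↦ ?_⟩
  have hz : z ∈ annulus a 1 := ⟨hz₁, by simpa using hz₂⟩
  refine tendsto_atTop_mono (fun n ↦ ?_)
    ((h.tendsto_atTop hC).const_mul_atTop (by norm_num : (0 : ℝ) < 10))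
  simpa [add_comm] using (iterate_mem_of_mapsTo_succ hmaps hz n).1.le
end

section
/- If p is a real polynomial all of whose zeros are real, then p has no positive local minimum and no negative local maximum on ℝ; i.e., if x₀ is a local minimum point of p with p(x₀) > 0 or a local maximum point with p(x₀) < 0, this is impossible. -/
/-!
A real-rooted polynomial factors as `p = c ∏ (X - r)` over ℝ. For each factor,
`(x - δ - r)(x + δ - r) = (x - r)² - δ² < (x - r)²`, so if no root lies within `|δ|` of `x`
the factors are positive and `p (x - δ) p (x + δ) < p x ²`. At a positive local minimum `x₀`
there is no root nearby, while `p (x₀ ± δ) ≥ p x₀ > 0` for small `δ` gives the reverse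
inequality. Local maxima are handled by passing to `-p`.
-/

open Polynomial

namespace Polynomial

theorem splits_of_forall_aeval_complex_eq_zero_im_eq_zero {p : ℝ[X]}
    (h : ∀ z : ℂ, aeval z p = 0 → z.im = 0) : p.Splits := by
  refine Splits.of_splits_map (algebraMap ℝ ℂ) (IsAlgClosed.splits _) fun z hz => ?_
  have hz_im : z.im = 0 := h z <| by
    rw [aeval_def, ← eval_map]
    exact (mem_roots'.mp hz).2
  exact ⟨z.re, Complex.ext (by simp) (by simp [hz_im])⟩

variable {p : ℝ[X]}

theorem Splits.eval_sub_mul_eval_add_lt_sq (hp : p.Splits) (hdeg : 0 < p.natDegree)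
    {x δ : ℝ} (hδ : δ ≠ 0) (hroots : ∀ r ∈ p.roots, |δ| < |x - r|) :
    p.eval (x - δ) * p.eval (x + δ) < p.eval x ^ 2 := by
  have hroots_ne : p.roots ≠ 0 := by
    rw [← Multiset.card_pos, splits_iff_card_roots.mp hp]
    exact hdeg
  have hlc : 0 < p.leadingCoeff ^ 2 :=
    sq_pos_of_ne_zero (leadingCoeff_ne_zero.mpr (ne_zero_of_natDegree_gt hdeg))
  have hfactor : ∀ r ∈ p.roots,
      0 < (x - δ - r) * (x + δ - r) ∧ (x - δ - r) * (x + δ - r) < (x - r) * (x - r) := by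
    intro r hr
    have hsq : δ ^ 2 < (x - r) ^ 2 := sq_lt_sq.mpr (hroots r hr)
    have hδsq : 0 < δ ^ 2 := sq_pos_of_ne_zero hδ
    constructor <;> nlinarith
  calc p.eval (x - δ) * p.eval (x + δ)
      = p.leadingCoeff ^ 2 * (p.roots.map fun r => (x - δ - r) * (x + δ - r)).prod := by
        rw [hp.eval_eq_prod_roots, hp.eval_eq_prod_roots, Multiset.prod_map_mul]; ring
    _ < p.leadingCoeff ^ 2 * (p.roots.map fun r => (x - r) * (x - r)).prod :=
        mul_lt_mul_of_pos_left (Multiset.prod_map_lt_prod_map hroots_ne _ _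
          (fun r hr => (hfactor r hr).1) (fun r hr => (hfactor r hr).2)) hlc
    _ = p.eval x ^ 2 := by
        rw [hp.eval_eq_prod_roots, Multiset.prod_map_mul]; ring

theorem Splits.eval_nonpos_of_isLocalMin (hp : p.Splits) (hdeg : 0 < p.natDegree) {x₀ : ℝ}
    (hmin : IsLocalMin (fun x => p.eval x) x₀) : p.eval x₀ ≤ 0 := by
  by_contra! hpos
  obtain ⟨ε, hε, hball⟩ := Metric.eventually_nhds_iff.mp hmin
  have hroots : ∀ r ∈ p.roots, |ε / 2| < |x₀ - r| := by
    intro r hr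
    have hr_far : ¬ dist r x₀ < ε := fun hdist => by
      have := hball hdist
      simp only [(isRoot_of_mem_roots hr).eq_zero] at this
      linarith
    rw [Real.dist_eq, abs_sub_comm, not_lt] at hr_far
    rw [abs_of_pos (half_pos hε)]
    linarith
  have hlt := hp.eval_sub_mul_eval_add_lt_sq hdeg (half_pos hε).ne' hroots
  have hleft : p.eval x₀ ≤ p.eval (x₀ - ε / 2) := hball (by
    rw [Real.dist_eq, sub_sub_cancel_left, abs_neg, abs_of_pos (half_pos hε)]; linarith)
  have hright : p.eval x₀ ≤ p.eval (x₀ + ε / 2) := hball (by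
    rw [Real.dist_eq, add_sub_cancel_left, abs_of_pos (half_pos hε)]; linarith)
  nlinarith

theorem Splits.eval_nonneg_of_isLocalMax (hp : p.Splits) (hdeg : 0 < p.natDegree) {x₀ : ℝ}
    (hmax : IsLocalMax (fun x => p.eval x) x₀) : 0 ≤ p.eval x₀ := by
  have hmin : IsLocalMin (fun x => (-p).eval x) x₀ := by simpa only [eval_neg] using hmax.neg
  simpa only [eval_neg, neg_nonpos] using
    hp.neg.eval_nonpos_of_isLocalMin (by rwa [natDegree_neg]) hmin

end Polynomial

/-- A nonconstant real polynomial all of whose complex zeros are real has no positive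
local minimum and no negative local maximum on ℝ. -/
theorem stmt10 (p : Polynomial ℝ) (hdeg : 0 < p.degree)
    (hroots : ∀ z : ℂ, Polynomial.aeval z p = 0 → z.im = 0) :
    ∀ x₀ : ℝ,
      (¬ (IsLocalMin (fun x => p.eval x) x₀ ∧ 0 < p.eval x₀)) ∧
      (¬ (IsLocalMax (fun x => p.eval x) x₀ ∧ p.eval x₀ < 0)) := by
  have hp := splits_of_forall_aeval_complex_eq_zero_im_eq_zero hroots
  have hnatDeg := natDegree_pos_iff_degree_pos.mpr hdeg
  intro x₀
  constructor
  · rintro ⟨hmin, hpos⟩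
    exact (hp.eval_nonpos_of_isLocalMin hnatDeg hmin).not_gt hpos
  · rintro ⟨hmax, hneg⟩
    exact (hp.eval_nonneg_of_isLocalMax hnatDeg hmax).not_gt hneg
end

section
/- For an entire function f(z) = C·z·∏_{k=1}^∞(1 - z/a_k) with 0 < a_1 < a_2 < ⋯ and ∑ 1/a_k < ∞, the modulus |f'| attains its minimum on each circle {|z| = r} at the point z = r on the positive real axis. -/
/-!
The partial products `C z ∏_{k<n} (1 - z/a_k)` are polynomials all of whose roots lie on
`[0, ∞)`, and by Gauss–Lucas so do the roots of their derivatives. A polynomial `q` with all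
roots on `[0, ∞)` satisfies `|q(|z|)| ≤ |q(z)|`, factor by factor, because `||z| - t| ≤ |z - t|`
for `t ≥ 0`. As `∑ 1/a_k < ∞`, the partial products converge locally uniformly, so their
derivatives converge too (Weierstrass) and the inequality passes to the limit.
-/

open Filter Topology Finset
open scoped ComplexOrder

lemma Complex.norm_ofReal_norm_sub_le {w : ℂ} (hw : 0 ≤ w) (z : ℂ) :
    ‖(‖z‖ : ℂ) - w‖ ≤ ‖z - w‖ := by
  obtain ⟨t, ht, rfl⟩ := RCLike.nonneg_iff_exists_ofReal.mp hw
  have := abs_norm_sub_norm_le z (t : ℂ)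
  rwa [Complex.norm_real, Real.norm_of_nonneg ht, ← Real.norm_eq_abs, ← Complex.norm_real,
    Complex.ofReal_sub] at this

namespace Polynomial

lemma rootSet_derivative_subset {P : ℂ[X]} {K : Set ℂ} (hK : Convex ℝ K)
    (hP : P.rootSet ℂ ⊆ K) : P.derivative.rootSet ℂ ⊆ K := by
  by_cases hdeg : 0 < P.degree
  · exact (rootSet_derivative_subset_convexHull_rootSet hdeg).trans (convexHull_min hP hK)
  · rw [derivative_of_natDegree_zero (natDegree_eq_zero_iff_degree_le_zero.mpr (not_lt.mp hdeg))]
    simp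

lemma norm_eval_norm_le_norm_eval {q : ℂ[X]} (hq : q.rootSet ℂ ⊆ Set.Ici 0) (z : ℂ) :
    ‖q.eval (‖z‖ : ℂ)‖ ≤ ‖q.eval z‖ := by
  rcases eq_or_ne q 0 with rfl | hq0
  · simp
  have hsplit : q.Splits := IsAlgClosed.splits q
  have norm_prod (m : Multiset ℂ) : ‖m.prod‖ = (m.map (‖·‖)).prod :=
    map_multiset_prod (normHom : ℂ →*₀ ℝ) m
  rw [hsplit.eval_eq_prod_roots, hsplit.eval_eq_prod_roots, norm_mul, norm_mul, norm_prod,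
    norm_prod, Multiset.map_map, Multiset.map_map]
  gcongr
  refine Multiset.prod_map_le_prod_map₀ _ _ (fun _ _ => norm_nonneg _) fun w hw => ?_
  exact Complex.norm_ofReal_norm_sub_le
    (hq ((mem_rootSet_of_ne hq0).mpr (isRoot_of_mem_roots hw))) z

noncomputable def partialProductPoly (c : ℂ) (b : ℕ → ℂ) (n : ℕ) : ℂ[X] :=
  C c * X * ∏ k ∈ range n, (1 - C (b k)⁻¹ * X)

lemma eval_partialProductPoly (c : ℂ) (b : ℕ → ℂ) (n : ℕ) (z : ℂ) :
    (partialProductPoly c b n).eval z = c * z * ∏ k ∈ range n, (1 - z / b k) := by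
  simp [partialProductPoly, eval_prod, inv_mul_eq_div]

lemma rootSet_partialProductPoly_subset {b : ℕ → ℂ} (hb : ∀ k, 0 ≤ b k) (c : ℂ) (n : ℕ) :
    (partialProductPoly c b n).rootSet ℂ ⊆ Set.Ici 0 := by
  intro w hw
  rw [mem_rootSet, coe_aeval_eq_eval, eval_partialProductPoly] at hw
  obtain ⟨hne, hroot⟩ := hw
  rcases mul_eq_zero.mp hroot with hcw | hprod
  · rcases mul_eq_zero.mp hcw with rfl | rfl
    · simp [partialProductPoly] at hne
    · exact Set.self_mem_Ici (a := (0 : ℂ))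
  · obtain ⟨k, -, hk⟩ := prod_eq_zero_iff.mp hprod
    rw [eq_of_div_eq_one (sub_eq_zero.mp hk).symm]
    exact hb k

end Polynomial

open Polynomial in
lemma norm_deriv_mul_prod_range_one_sub_div_le {b : ℕ → ℂ} (hb : ∀ k, 0 ≤ b k) (c : ℂ)
    (n : ℕ) (z : ℂ) :
    ‖deriv (fun z => c * z * ∏ k ∈ range n, (1 - z / b k)) ‖z‖‖
      ≤ ‖deriv (fun z => c * z * ∏ k ∈ range n, (1 - z / b k)) z‖ := by
  simp_rw [← eval_partialProductPoly, Polynomial.deriv]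
  exact norm_eval_norm_le_norm_eval
    (rootSet_derivative_subset (convex_Ici 0) (rootSet_partialProductPoly_subset hb c n)) z

lemma tendstoLocallyUniformly_prod_range_one_sub_div {b : ℕ → ℂ}
    (hb : Summable fun k => ‖b k‖⁻¹) :
    TendstoLocallyUniformly (fun n z => ∏ k ∈ range n, (1 - z / b k))
      (fun z => ∏' k, (1 - z / b k)) atTop := by
  rw [← tendstoLocallyUniformlyOn_univ]
  refine HasProdLocallyUniformlyOn.tendstoLocallyUniformlyOn_finsetRange ?_
  refine hasProdLocallyUniformlyOn_of_forall_compact isOpen_univ fun K _ hK => ?_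
  obtain ⟨R, hR⟩ := hK.isBounded.exists_norm_le
  simp only [sub_eq_add_neg]
  refine Summable.hasProdUniformlyOn_nat_one_add hK (hb.mul_left R)
    (.of_forall fun k z hz => ?_) fun k => by fun_prop
  rw [norm_neg, norm_div, div_eq_mul_inv]
  gcongr
  exact hR z hz

lemma tendsto_deriv_mul_prod_range_one_sub_div {b : ℕ → ℂ}
    (hb : Summable fun k => ‖b k‖⁻¹) (c w : ℂ) :
    Tendsto (fun n => deriv (fun z => c * z * ∏ k ∈ range n, (1 - z / b k)) w) atTop
      (𝓝 (deriv (fun z => c * z * ∏' k, (1 - z / b k)) w)) := by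
  have hprod := tendstoLocallyUniformly_prod_range_one_sub_div hb
  have hlin : TendstoLocallyUniformly (fun (_ : ℕ) (z : ℂ) => c * z) (fun z => c * z) atTop :=
    (Metric.tendstoUniformly_iff.mpr fun ε hε => .of_forall fun _ _ => by simpa using hε)
      |>.tendstoLocallyUniformly
  have hmul := hlin.fun_mul₀ hprod (by fun_prop)
    (hprod.continuous (.of_forall fun n => by fun_prop))
  rw [← tendstoLocallyUniformlyOn_univ] at hmul
  exact (hmul.deriv (.of_forall fun n => by fun_prop) isOpen_univ).tendsto_at (Set.mem_univ w)

theorem stmt12_general (a : ℕ → ℝ) (hpos : ∀ k : ℕ, 0 < a (k+1))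
    (hsum : Summable (fun k : ℕ => 1 / a (k+1)))
    (C : ℝ) (f : ℂ → ℂ)
    (hf : ∀ z, f z = C * z * ∏' k : ℕ, (1 - z / (a (k+1) : ℂ)))
    (r : ℝ) :
    ∀ z : ℂ, ‖z‖ = r →
      ‖deriv f (r : ℂ)‖ ≤ ‖deriv f z‖ := by
  rintro z rfl
  set b : ℕ → ℂ := fun k => (a (k+1) : ℂ)
  have hb_nonneg : ∀ k, 0 ≤ b k := fun k => Complex.zero_le_real.mpr (hpos k).le
  have hb_summable : Summable fun k => ‖b k‖⁻¹ :=
    hsum.congr fun k => by simp [b, abs_of_pos (hpos k)]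
  rw [show f = fun z => C * z * ∏' k, (1 - z / b k) from funext hf]
  exact le_of_tendsto_of_tendsto' (tendsto_deriv_mul_prod_range_one_sub_div hb_summable _ _).norm
    (tendsto_deriv_mul_prod_range_one_sub_div hb_summable _ _).norm
    (norm_deriv_mul_prod_range_one_sub_div_le hb_nonneg C · z)

/-- For f(z) = C·z·∏(1 - z/a_k) with 0 < a_1 < a_2 < ⋯ and ∑ 1/a_k < ∞, the modulus
|f'| attains its minimum on each circle {|z| = r} at the point z = r. -/
theorem stmt12 (a : ℕ → ℝ) (hpos : ∀ k : ℕ, 0 < a (k+1))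
    (hmono : StrictMono (fun k : ℕ => a (k+1)))
    (hsum : Summable (fun k : ℕ => 1 / a (k+1)))
    (C : ℝ) (hC : 0 < C) (f : ℂ → ℂ)
    (hf : ∀ z, f z = C * z * ∏' k : ℕ, (1 - z / (a (k+1) : ℂ)))
    (hd : Differentiable ℂ f) (r : ℝ) (hr : 0 < r) :
    ∀ z : ℂ, ‖z‖ = r →
      ‖deriv f (r : ℂ)‖ ≤ ‖deriv f z‖ :=
  stmt12_general a hpos hsum C f hf r
end

section
/- With the setup of the main construction, for r_k ≤ x < a_k (k ≥ 1, so that x > 2a_j for j ≤ k-1) one has x·f'(x)/f(x) = 1 + ∑_{j=1}^∞ x/(x - a_j) ≤ -2 < 0. -/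
/-!
Since `a_{j+1} ≥ 8 a_j`, the series `∑ 1/a_j` converges, so `z ∏ (1 - z/a_j)` is a canonical
product converging locally uniformly on `ℂ`; its logarithmic derivative is therefore the sum of
those of its factors, which gives `x f'(x)/f(x) = 1 + ∑ x/(x - a_j)`. In that sum the `k - 1`
terms with `a_j ≤ x/2` are at most `2` each, the term `j = k` is at most `-(2k+1)` because
`x ≥ (2k+1)/(2k+2) · a_k`, and the terms with `j > k` are negative.
-/

open Finset

theorem one_sub_div_ne_zero {K : Type*} [Field K] {c z : K} (hc : c ≠ 0) (hz : z ≠ c) :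
    1 - z / c ≠ 0 := by
  rw [one_sub_div hc]
  exact div_ne_zero (sub_ne_zero.mpr hz.symm) hc

theorem summable_inv_sub_of_summable_norm_inv {𝕜 ι : Type*} [NormedField 𝕜] [CompleteSpace 𝕜]
    {b : ι → 𝕜} (hb0 : ∀ i, b i ≠ 0) (hb : Summable fun i ↦ ‖b i‖⁻¹) (z : 𝕜) : Summable fun i ↦ (z - b i)⁻¹ := by
  refine Summable.of_norm_bounded_eventually (hb.mul_left 2) ?_
  have hsmall : ∀ᶠ i in Filter.cofinite, ‖b i‖⁻¹ ≤ (2 * ‖z‖ + 1)⁻¹ :=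
    hb.tendsto_cofinite_zero.eventually (ge_mem_nhds (by positivity))
  filter_upwards [hsmall] with i hi
  have hbi : 0 < ‖b i‖ := norm_pos_iff.mpr (hb0 i)
  have hfar : 2 * ‖z‖ + 1 ≤ ‖b i‖ := by
    rwa [inv_le_inv₀ hbi (by positivity)] at hi
  have hsub : ‖b i‖ / 2 ≤ ‖z - b i‖ := by
    have := norm_sub_norm_le (b i) z
    rw [norm_sub_rev] at this
    linarith
  calc ‖(z - b i)⁻¹‖ ≤ (‖b i‖ / 2)⁻¹ := by rw [norm_inv]; exact inv_anti₀ (by positivity) hsub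
    _ = 2 * ‖b i‖⁻¹ := by rw [inv_div, div_eq_mul_inv]

theorem summable_inv_of_mul_le_succ_s13 {b : ℕ → ℝ} {r : ℝ} (hr : 1 < r) (hpos : ∀ n, 0 < b n)
    (hstep : ∀ n, r * b n ≤ b (n + 1)) : Summable fun n ↦ (b n)⁻¹ := by
  refine summable_of_ratio_norm_eventually_le (inv_lt_one_of_one_lt₀ hr) (.of_forall fun n ↦ ?_)
  rw [Real.norm_of_nonneg (inv_nonneg.mpr (hpos _).le),
    Real.norm_of_nonneg (inv_nonneg.mpr (hpos n).le), ← mul_inv]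
  exact inv_anti₀ (mul_pos (by linarith) (hpos n)) (hstep n)

namespace Lacunary

-- Indices are shifted to start at `0`: `b n` is `a_{n+1}` and `m` is `k - 1`.

variable {b : ℕ → ℝ} (hpos : ∀ n, 0 < b n) (hstep : ∀ n, 3 * b n ≤ b (n + 1)) {m : ℕ} {x : ℝ}
  (hx : (2 * m + 3) / (2 * m + 4) * b m ≤ x) (hxm : x < b m)
include hpos

include hx in
theorem pos : 0 < x := lt_of_lt_of_le (mul_pos (by positivity) (hpos m)) hx

include hstep

theorem monotone : Monotone b :=
  monotone_nat_of_le_succ fun n ↦ by linarith [hpos n, hstep n]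

include hx in
theorem two_mul_le_of_lt {n : ℕ} (hn : n < m) : 2 * b n ≤ x := by
  obtain ⟨k, rfl⟩ : ∃ k, m = k + 1 := ⟨m - 1, by omega⟩
  have hbn : b n ≤ b k := monotone hpos hstep (by omega)
  have hcoef : 3 / 4 ≤ (2 * ((k + 1 : ℕ) : ℝ) + 3) / (2 * ((k + 1 : ℕ) : ℝ) + 4) := by
    rw [le_div_iff₀ (by positivity)]; push_cast; linarith [(k.cast_nonneg : (0:ℝ) ≤ k)]
  nlinarith [hstep k, hpos (k + 1)]

include hxm in
theorem lt_of_le {n : ℕ} (hn : m ≤ n) : x < b n :=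
  hxm.trans_le (monotone hpos hstep hn)

include hx hxm in
theorem ne_apply (n : ℕ) : x ≠ b n := by
  rcases lt_or_ge n m with hn | hn
  · linarith [two_mul_le_of_lt hpos hstep hx hn, hpos n]
  · exact (lt_of_le hpos hstep hxm hn).ne

theorem summable_norm_inv : Summable fun n ↦ ‖b n‖⁻¹ := by
  simpa [abs_of_pos (hpos _)] using summable_inv_of_mul_le_succ_s13 (by norm_num) hpos hstep

include hx hxm in
theorem one_add_tsum_div_sub_le : 1 + ∑' n, x / (x - b n) ≤ -2 := by
  have hx0 : 0 < x := pos hpos hx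
  have hsum : Summable fun n ↦ x / (x - b n) := by
    simpa [div_eq_mul_inv] using
      (summable_inv_sub_of_summable_norm_inv (fun n ↦ (hpos n).ne') (summable_norm_inv hpos hstep) x).mul_left x
  have hhead : ∑ n ∈ range m, x / (x - b n) ≤ 2 * m := by
    have : ∀ n ∈ range m, x / (x - b n) ≤ 2 := fun n hn ↦ by
      have := two_mul_le_of_lt hpos hstep hx (mem_range.mp hn)
      rw [div_le_iff₀ (by linarith [hpos n])]; linarith
    simpa [mul_comm] using sum_le_card_nsmul _ _ _ this
  have hcrit : x / (x - b m) ≤ -(2 * m + 3) := by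
    rw [div_le_iff_of_neg (by linarith)]
    rw [div_mul_eq_mul_div, div_le_iff₀ (by positivity)] at hx
    linarith
  have htail : ∑' n, x / (x - b (n + (m + 1))) ≤ 0 :=
    tsum_nonpos fun n ↦ div_nonpos_of_nonneg_of_nonpos hx0.le
      (by linarith [lt_of_le hpos hstep hxm (by omega : m ≤ n + (m + 1))])
  rw [← hsum.sum_add_tsum_nat_add (m + 1), sum_range_succ]
  linarith

end Lacunary

noncomputable def canonicalProduct {ι : Type*} (b : ι → ℂ) (z : ℂ) : ℂ :=
  ∏' i, (1 - z / b i)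

namespace canonicalProduct

variable {ι : Type*} {b : ι → ℂ}

theorem hasProdLocallyUniformlyOn (hb : Summable fun i ↦ ‖b i‖⁻¹) :
    HasProdLocallyUniformlyOn (fun i z ↦ 1 - z / b i) (canonicalProduct b) Set.univ := by
  rw [show canonicalProduct b = fun z ↦ ∏' i, (1 + -(z / b i)) from
    funext fun z ↦ by simp only [canonicalProduct, sub_eq_add_neg]]
  simp_rw [sub_eq_add_neg]
  refine hasProdLocallyUniformlyOn_of_forall_compact isOpen_univ fun K _ hK ↦ ?_
  obtain ⟨R, hR⟩ := hK.isBounded.exists_norm_le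
  refine (hb.mul_left R).hasProdUniformlyOn_one_add hK (.of_forall fun i z hz ↦ ?_)
    fun i ↦ by fun_prop
  rw [norm_neg, norm_div, div_eq_mul_inv]
  gcongr
  exact hR z hz

theorem differentiable (hb : Summable fun i ↦ ‖b i‖⁻¹) :
    Differentiable ℂ (canonicalProduct b) := by
  rw [← differentiableOn_univ]
  exact (hasProdLocallyUniformlyOn hb).differentiableOn
    (.of_forall fun s ↦ by simpa [Finset.prod_fn] using
      DifferentiableOn.finsetProd (fun _ _ ↦ by fun_prop)) isOpen_univ

theorem ne_zero (hb0 : ∀ i, b i ≠ 0) (hb : Summable fun i ↦ ‖b i‖⁻¹) {z : ℂ}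
    (hz : ∀ i, z ≠ b i) : canonicalProduct b z ≠ 0 := by
  have hfac := fun i ↦ one_sub_div_ne_zero (hb0 i) (hz i)
  simp_rw [canonicalProduct, sub_eq_add_neg] at hfac ⊢
  refine tprod_one_add_ne_zero_of_summable hfac ?_
  simpa [div_eq_mul_inv] using hb.mul_left ‖z‖

theorem logDeriv_eq (hb0 : ∀ i, b i ≠ 0) (hb : Summable fun i ↦ ‖b i‖⁻¹) {z : ℂ}
    (hz : ∀ i, z ≠ b i) : logDeriv (canonicalProduct b) z = ∑' i, (z - b i)⁻¹ := by
  have hterm : ∀ i, logDeriv (fun w ↦ 1 - w / b i) z = (z - b i)⁻¹ := fun i ↦ by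
    have hzb : z - b i ≠ 0 := sub_ne_zero.mpr (hz i)
    rw [logDeriv_apply, deriv_const_sub, deriv_div_const, deriv_id'']
    field_simp [hb0 i]
    rw [← neg_sub z (b i), div_neg, neg_neg, div_self hzb]
  have hsum := summable_inv_sub_of_summable_norm_inv hb0 hb z
  simp_rw [← hterm] at hsum ⊢
  exact logDeriv_tprod_eq_tsum isOpen_univ (Set.mem_univ z)
    (fun i ↦ one_sub_div_ne_zero (hb0 i) (hz i)) (fun i ↦ by fun_prop) hsum
    ⟨_, hasProdLocallyUniformlyOn hb⟩ (ne_zero hb0 hb hz)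

theorem mul_logDeriv_const_mul_mul (hb0 : ∀ i, b i ≠ 0) (hb : Summable fun i ↦ ‖b i‖⁻¹)
    {c z : ℂ} (hc : c ≠ 0) (hz0 : z ≠ 0) (hz : ∀ i, z ≠ b i) :
    z * logDeriv (fun w ↦ c * w * canonicalProduct b w) z = 1 + ∑' i, z / (z - b i) := by
  rw [logDeriv_mul (f := fun w ↦ c * w) z (mul_ne_zero hc hz0) (ne_zero hb0 hb hz) (by fun_prop)
    (differentiable hb z), logDeriv_const_mul z c hc, logDeriv_id', logDeriv_eq hb0 hb hz,
    mul_add, ← tsum_mul_left, mul_one_div_cancel hz0]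
  simp only [div_eq_mul_inv]

end canonicalProduct

section RecursiveSequence

variable {C : ℝ} {a : ℕ → ℝ} (hC : 1 ≤ C) (hpos : ∀ k : ℕ, 1 ≤ k → 0 < a k)
  (hrec : ∀ k : ℕ, 1 ≤ k → a (k+1) = 8 * C * a k * ∏ j ∈ Finset.Icc 1 (k-1), (a k / a j))
include hC hpos hrec

theorem eight_mul_le_succ_of_forall_le {k : ℕ} (hk : 1 ≤ k)
    (hle : ∀ j ∈ Icc 1 (k - 1), a j ≤ a k) : 8 * a k ≤ a (k + 1) := by
  have hak := hpos k hk
  have hprod : 1 ≤ ∏ j ∈ Icc 1 (k - 1), (a k / a j) := one_le_prod fun j hj ↦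
    (one_le_div (hpos j (mem_Icc.mp hj).1)).mpr (hle j hj)
  rw [hrec k hk]
  calc 8 * a k ≤ 8 * C * a k := by nlinarith
    _ ≤ _ := le_mul_of_one_le_right (by positivity) hprod

theorem le_of_le_of_rec {j k : ℕ} (hj : 1 ≤ j) (hjk : j ≤ k) : a j ≤ a k := by
  induction k generalizing j with
  | zero => omega
  | succ k ih =>
    rcases hjk.eq_or_lt with rfl | hlt
    · exact le_rfl
    have hk : 1 ≤ k := by omega
    have hstep := eight_mul_le_succ_of_forall_le hC hpos hrec hk fun i hi ↦
      ih (mem_Icc.mp hi).1 (by have := (mem_Icc.mp hi).2; omega)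
    exact (ih hj (by omega)).trans (by linarith [hpos k hk])

theorem eight_mul_le_succ_of_rec_s13 {k : ℕ} (hk : 1 ≤ k) : 8 * a k ≤ a (k + 1) :=
  eight_mul_le_succ_of_forall_le hC hpos hrec hk fun j hj ↦
    le_of_le_of_rec hC hpos hrec (mem_Icc.mp hj).1 (by have := (mem_Icc.mp hj).2; omega)

end RecursiveSequence

/-- With the main construction, for C sufficiently large, k ≥ 1 and real x with
r_k ≤ x < a_k one has x·f'(x)/f(x) = 1 + ∑_j x/(x - a_j) ≤ -2 < 0. -/
theorem stmt13 : ∃ C0 : ℝ, ∀ C : ℝ, C0 ≤ C →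
    ∀ a : ℕ → ℝ, (∀ k : ℕ, 1 ≤ k → 0 < a k) → a 1 = 1 →
    (∀ k : ℕ, 1 ≤ k → a (k+1) = 8 * C * a k * ∏ j ∈ Finset.Icc 1 (k-1), (a k / a j)) →
    ∀ f : ℂ → ℂ, (∀ z, f z = C * z * ∏' i : ℕ, (1 - z / (a (i+1) : ℂ))) →
    ∀ k : ℕ, 1 ≤ k → ∀ x : ℝ,
      (2 * (k : ℝ) + 1) / (2 * (k : ℝ) + 2) * a k ≤ x → x < a k →
      f (x : ℂ) ≠ 0 →
      ((x : ℂ) * deriv f (x : ℂ) / f (x : ℂ) =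
        1 + ∑' j : ℕ, (x : ℂ) / ((x : ℂ) - (a (j+1) : ℂ))) ∧
      ((x : ℂ) * deriv f (x : ℂ) / f (x : ℂ)).re ≤ -2 := by
  refine ⟨1, fun C hC a hpos _ hrec f hf k hk x hx hxk _ ↦ ?_⟩
  obtain ⟨m, rfl⟩ : ∃ m, k = m + 1 := ⟨k - 1, by omega⟩
  set b : ℕ → ℝ := fun n ↦ a (n + 1)
  have hbpos : ∀ n, 0 < b n := fun n ↦ hpos _ (Nat.le_add_left 1 n)
  have hbstep : ∀ n, 3 * b n ≤ b (n + 1) := fun n ↦ by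
    linarith [eight_mul_le_succ_of_rec_s13 hC hpos hrec (Nat.le_add_left 1 n), hbpos n]
  have hbx : (2 * m + 3) / (2 * m + 4) * b m ≤ x := by
    convert hx using 2; push_cast; ring
  have hid : (x : ℂ) * deriv f x / f x = 1 + ∑' j, (x : ℂ) / (x - (a (j + 1) : ℂ)) := by
    rw [mul_div_assoc, ← logDeriv_apply, show f = fun w ↦ (C : ℂ) * w * canonicalProduct
      (fun n ↦ (b n : ℂ)) w from funext hf]
    refine canonicalProduct.mul_logDeriv_const_mul_mul (fun n ↦ by exact_mod_cast (hbpos n).ne')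
      ?_ (by exact_mod_cast (by linarith : (0 : ℝ) < C).ne')
      (by exact_mod_cast (Lacunary.pos hbpos hbx).ne') fun n ↦ by
        exact_mod_cast Lacunary.ne_apply hbpos hbstep hbx hxk n
    simpa using Lacunary.summable_norm_inv hbpos hbstep
  refine ⟨hid, ?_⟩
  have hre : (1 + ∑' j, (x : ℂ) / (x - (a (j + 1) : ℂ))).re = 1 + ∑' n, x / (x - b n) := by
    simp_rw [← Complex.ofReal_sub, ← Complex.ofReal_div, ← Complex.ofReal_tsum]
    simp [b]
  rw [hid, hre]
  exact Lacunary.one_add_tsum_div_sub_le hbpos hbstep hbx hxk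
end
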